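/- arXiv:2306.09072 — 4 statements merged into one kernel-verified Lean document; each statement's English description precedes it below -/
import Mathlib

section
/- Every L♮-convex polyhedron P ⊆ ℝ^n can be represented as P = Q + C, where Q is a bounded L♮-convex polyhedron, C is an L♮-convex cone, and Q + C denotes the Minkowski sum. -/
open Set Pointwise

noncomputable section

/-- Embedding of integer vectors into real vectors. -/
def coeZ {n : ℕ} (z : Fin n → ℤ) : Fin n → ℝ := fun i => (z i : ℝ)

/-- A (nonempty) polyhedron: solution set of a finite system of linear inequalities. -/
def IsPolyhedron {n : ℕ} (P : Set (Fin n → ℝ)) : Prop :=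
  P.Nonempty ∧ ∃ (m : ℕ) (A : Matrix (Fin m) (Fin n) ℝ) (b : Fin m → ℝ),
    P = {x | A.mulVec x ≤ b}

/-- The integer points of a set `P ⊆ ℝ^n`. -/
def intPts {n : ℕ} (P : Set (Fin n → ℝ)) : Set (Fin n → ℝ) :=
  {x ∈ P | ∀ i, ∃ z : ℤ, x i = (z : ℝ)}

/-- The box `{x : l ≤ x ≤ u}` with integral bounds. -/
def intBox {n : ℕ} (l u : Fin n → ℤ) : Set (Fin n → ℝ) :=
  {x | ∀ i, (l i : ℝ) ≤ x i ∧ x i ≤ (u i : ℝ)}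

/-- A set `P ⊆ ℝ^n` is box-integer if its intersection with every integral box,
whenever nonempty, equals the convex hull of its integer points. -/
def IsBoxInteger {n : ℕ} (P : Set (Fin n → ℝ)) : Prop :=
  ∀ l u : Fin n → ℤ, l ≤ u → (P ∩ intBox l u).Nonempty →
    P ∩ intBox l u = convexHull ℝ (intPts (P ∩ intBox l u))

/-- A set closed under multiplication by nonnegative scalars. -/
def IsConeSet {n : ℕ} (C : Set (Fin n → ℝ)) : Prop :=
  ∀ x ∈ C, ∀ lam : ℝ, 0 ≤ lam → lam • x ∈ C

/-- The characteristic (recession) cone of `P`. -/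
def charCone {n : ℕ} (P : Set (Fin n → ℝ)) : Set (Fin n → ℝ) :=
  {d | ∀ x ∈ P, x + d ∈ P}

/-- The integral neighborhood `N(x)` of a real vector `x`. -/
def intNbhd {n : ℕ} (x : Fin n → ℝ) : Set (Fin n → ℤ) :=
  {z | ∀ i, |x i - (z i : ℝ)| < 1}

/-- The convex hull (in `ℝ^n`) of a set of integer vectors. -/
def convZ {n : ℕ} (S : Set (Fin n → ℤ)) : Set (Fin n → ℝ) :=
  convexHull ℝ (coeZ '' S)

/-- A nonempty set `S ⊆ ℤ^n` is integrally convex if every point `x` of its convex hull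
belongs to the convex hull of `S ∩ N(x)`. -/
def IntegrallyConvex {n : ℕ} (S : Set (Fin n → ℤ)) : Prop :=
  S.Nonempty ∧ ∀ x ∈ convZ S, x ∈ convZ (S ∩ intNbhd x)

/-- An L♮-convex polyhedron, given by its standard inequality description. -/
def IsLNatPolyhedron {n : ℕ} (P : Set (Fin n → ℝ)) : Prop :=
  P.Nonempty ∧ ∃ (I J : Set (Fin n)) (E : Set (Fin n × Fin n))
    (l u : Fin n → ℤ) (dd : Fin n × Fin n → ℤ),
    P = {x | (∀ i ∈ I, (l i : ℝ) ≤ x i) ∧ (∀ j ∈ J, x j ≤ (u j : ℝ)) ∧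
             (∀ p ∈ E, x p.2 - x p.1 ≤ (dd p : ℝ))}

/-- An L²♮-convex polyhedron: the Minkowski sum of two L♮-convex polyhedra. -/
def IsL2NatPolyhedron {n : ℕ} (P : Set (Fin n → ℝ)) : Prop :=
  ∃ P₁ P₂ : Set (Fin n → ℝ), IsLNatPolyhedron P₁ ∧ IsLNatPolyhedron P₂ ∧ P = P₁ + P₂

/-- An M♮-convex set of integer vectors (exchange axiom). -/
def IsMNatSet {n : ℕ} (S : Set (Fin n → ℤ)) : Prop :=
  S.Nonempty ∧ ∀ x ∈ S, ∀ y ∈ S, ∀ i : Fin n, y i < x i →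
    ((x - Pi.single i 1 ∈ S ∧ y + Pi.single i 1 ∈ S) ∨
     ∃ j : Fin n, x j < y j ∧ x - Pi.single i 1 + Pi.single j 1 ∈ S ∧
       y + Pi.single i 1 - Pi.single j 1 ∈ S)

/-- An M♮-convex polyhedron: the convex hull of an M♮-convex set. -/
def IsMNatPolyhedron {n : ℕ} (P : Set (Fin n → ℝ)) : Prop :=
  ∃ S : Set (Fin n → ℤ), IsMNatSet S ∧ P = convZ S

/-- An L♮-convex set of integer vectors (closed under componentwise
rounded-up and rounded-down midpoints). -/
def IsLNatSet {n : ℕ} (S : Set (Fin n → ℤ)) : Prop :=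
  S.Nonempty ∧ ∀ x ∈ S, ∀ y ∈ S,
    (fun i => ⌈(x i + y i : ℚ) / 2⌉) ∈ S ∧ (fun i => ⌊(x i + y i : ℚ) / 2⌋) ∈ S

/-- An L²♮-convex set: the Minkowski sum of two L♮-convex sets. -/
def IsL2NatSet {n : ℕ} (S : Set (Fin n → ℤ)) : Prop :=
  ∃ S₁ S₂ : Set (Fin n → ℤ), IsLNatSet S₁ ∧ IsLNatSet S₂ ∧ S = S₁ + S₂



namespace LNatAux

open scoped Classical

set_option linter.unusedSectionVars false

variable {V : Type*} [Fintype V]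

/-- Step relation of the auxiliary graph `H`. -/
def HStep (Γ : Set (V × V)) (a b : V) : Prop := (a, b) ∈ Γ ∨ (b, a) ∈ Γ

/-- Slack of an edge at a point. -/
def sig (γ : V × V → ℝ) (y : V → ℝ) (e : V × V) : ℝ := γ e - (y e.2 - y e.1)

/-- Weight of `H`-step `a → b` (0 if it can be traversed backwards). -/
def om (Γ : Set (V × V)) (γ : V × V → ℝ) (x : V → ℝ) (a b : V) : ℝ :=
  if (b, a) ∈ Γ then 0 else if (a, b) ∈ Γ then sig γ x (a, b) else 0

/-- Per-pair compensation term (depends only on the base point `x0`). -/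
def Rp (Γ : Set (V × V)) (γ : V × V → ℝ) (x0 : V → ℝ) (e : V × V) : ℝ :=
  (if e ∈ Γ then max (sig γ x0 e) 0 else 0)
    + (if (e.2, e.1) ∈ Γ then max (sig γ x0 (e.2, e.1)) 0 else 0)

/-- The global compensation constant. -/
def Bc (Γ : Set (V × V)) (γ : V × V → ℝ) (x0 : V → ℝ) : ℝ :=
  ∑ a : V, ∑ b : V, Rp Γ γ x0 (a, b)

/-- Weight of a walk with head `a` and tail `p`. -/
def Wt (Γ : Set (V × V)) (γ : V × V → ℝ) (x : V → ℝ) : V → List V → ℝ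
  | _, [] => 0
  | a, b :: p => om Γ γ x a b + Wt Γ γ x b p

/-- Final vertex of a walk. -/
def endV : V → List V → V
  | a, [] => a
  | _, b :: p => endV b p

/-- Sum of compensation terms along a walk. -/
def Rsum (Γ : Set (V × V)) (γ : V × V → ℝ) (x0 : V → ℝ) : V → List V → ℝ
  | _, [] => 0
  | a, b :: p => Rp Γ γ x0 (a, b) + Rsum Γ γ x0 b p

variable (Γ : Set (V × V)) (γ : V × V → ℝ) (x0 x : V → ℝ)

/-- Difference from the base point. -/
def ww : V → ℝ := fun v => x v - x0 v

/-- `Feas Γ γ y` : the point `y` satisfies all difference constraints. -/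
def Feas (y : V → ℝ) : Prop := ∀ e ∈ Γ, y e.2 - y e.1 ≤ γ e

section lemmas

variable {Γ γ x0 x}

lemma sig_nonneg (hy : Feas Γ γ x) {e : V × V} (he : e ∈ Γ) : 0 ≤ sig γ x e :=
  sub_nonneg.2 (hy e he)

lemma om_nonneg (hx : Feas Γ γ x) (a b : V) : 0 ≤ om Γ γ x a b := by
  unfold om
  split
  · exact le_refl 0
  · split
    · exact sig_nonneg hx ‹_›
    · exact le_refl 0

lemma Rp_nonneg (e : V × V) : 0 ≤ Rp Γ γ x0 e := by
  unfold Rp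
  have h1 : (0:ℝ) ≤ (if e ∈ Γ then max (sig γ x0 e) 0 else 0) := by
    split
    · exact le_max_right _ _
    · exact le_refl 0
  have h2 : (0:ℝ) ≤ (if (e.2, e.1) ∈ Γ then max (sig γ x0 (e.2, e.1)) 0 else 0) := by
    split
    · exact le_max_right _ _
    · exact le_refl 0
  linarith

lemma Bc_nonneg : 0 ≤ Bc Γ γ x0 :=
  Finset.sum_nonneg fun _ _ => Finset.sum_nonneg fun _ _ => Rp_nonneg _

lemma Wt_nonneg (hx : Feas Γ γ x) : ∀ (a : V) (p : List V), 0 ≤ Wt Γ γ x a p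
  | _, [] => le_refl 0
  | a, b :: p => add_nonneg (om_nonneg hx a b) (Wt_nonneg hx b p)

lemma step_bound (hx0 : Feas Γ γ x0) (hx : Feas Γ γ x) {a b : V} (h : HStep Γ a b) :
    ww x0 x a - ww x0 x b ≤ om Γ γ x a b + Rp Γ γ x0 (a, b) := by
  unfold ww om Rp sig
  by_cases hba : (b, a) ∈ Γ
  · have h1 : x a - x b ≤ γ (b, a) := hx (b, a) hba
    have h2 : γ (b, a) - (x0 a - x0 b) ≤ max (γ (b, a) - (x0 a - x0 b)) 0 := le_max_left _ _
    have h3 : (0:ℝ) ≤ (if (a, b) ∈ Γ then max (γ (a,b) - (x0 b - x0 a)) 0 else 0) := by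
      split
      · exact le_max_right _ _
      · exact le_refl 0
    simp only [if_pos hba]
    linarith
  · rcases h with hab | hba'
    · have h0 : γ (a, b) - (x0 b - x0 a) ≥ 0 := sub_nonneg.2 (hx0 (a, b) hab)
      have h3 : (0:ℝ) ≤ (if (b, a) ∈ Γ then max (γ (b,a) - (x0 a - x0 b)) 0 else 0) := by
        split
        · exact le_max_right _ _
        · exact le_refl 0
      have h4 : γ (a, b) - (x0 b - x0 a) ≤ max (γ (a, b) - (x0 b - x0 a)) 0 := le_max_left _ _
      simp only [if_neg hba, if_pos hab]
      linarith
    · exact absurd hba' hba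

lemma Wt_append (a : V) (p q : List V) :
    Wt Γ γ x a (p ++ q) = Wt Γ γ x a p + Wt Γ γ x (endV a p) q := by
  induction p generalizing a with
  | nil => simp [Wt, endV]
  | cons b p ih => simp [Wt, endV, ih b]; ring

lemma endV_append (a : V) (p q : List V) :
    endV a (p ++ q) = endV (endV a p) q := by
  induction p generalizing a with
  | nil => simp [endV]
  | cons b p ih => simp [endV, ih b]

lemma lemmaA (hx0 : Feas Γ γ x0) (hx : Feas Γ γ x) :
    ∀ (a : V) (p : List V), List.Chain (HStep Γ) a p →
      ww x0 x a - ww x0 x (endV a p) ≤ Wt Γ γ x a p + Rsum Γ γ x0 a p := by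
  intro a p
  induction p generalizing a with
  | nil => intro _; simp [Wt, endV, Rsum]
  | cons b p ih =>
    intro hch
    replace hch : HStep Γ a b ∧ List.Chain (HStep Γ) b p := List.isChain_cons_cons.1 hch
    have h1 := step_bound hx0 hx hch.1
    have h2 := ih b hch.2
    simp only [Wt, endV, Rsum]
    linarith

lemma Rsum_le (a : V) (p : List V) (h : (a :: p).Nodup) :
    Rsum Γ γ x0 a p ≤ Bc Γ γ x0 := by
  have key : ∀ (p : List V) (a : V), (a :: p).Nodup →
      Rsum Γ γ x0 a p ≤ ∑ v ∈ (a :: p).toFinset, ∑ b : V, Rp Γ γ x0 (v, b) := by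
    intro p
    induction p with
    | nil =>
      intro a _
      simp only [Rsum]
      exact Finset.sum_nonneg fun v _ => Finset.sum_nonneg fun b _ => Rp_nonneg _
    | cons b p ih =>
      intro a ha
      have hnd : (b :: p).Nodup := (List.nodup_cons.1 ha).2
      have hna : a ∉ (b :: p) := (List.nodup_cons.1 ha).1
      have h1 : Rp Γ γ x0 (a, b) ≤ ∑ c : V, Rp Γ γ x0 (a, c) :=
        Finset.single_le_sum (fun c _ => Rp_nonneg (e := (a, c))) (Finset.mem_univ b)
      have h2 := ih b hnd
      have h3 : (a :: b :: p).toFinset = insert a ((b :: p).toFinset) := by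
        simp
      rw [h3, Finset.sum_insert (by simpa using hna)]
      simp only [Rsum]
      linarith
  calc Rsum Γ γ x0 a p ≤ ∑ v ∈ (a :: p).toFinset, ∑ b : V, Rp Γ γ x0 (v, b) := key p a h
    _ ≤ ∑ v : V, ∑ b : V, Rp Γ γ x0 (v, b) := by
        apply Finset.sum_le_sum_of_subset_of_nonneg (Finset.subset_univ _)
        intro v _ _
        exact Finset.sum_nonneg fun b _ => Rp_nonneg _
    _ = Bc Γ γ x0 := rfl

lemma exists_dup {α : Type*} : ∀ (l : List α), ¬l.Nodup →
    ∃ (l₁ : List α) (v : α) (l₂ l₃ : List α), l = l₁ ++ v :: (l₂ ++ v :: l₃) := by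
  intro l
  induction l with
  | nil => intro h; exact absurd List.nodup_nil h
  | cons a t ih =>
    intro h
    by_cases ha : a ∈ t
    · obtain ⟨s, u, rfl⟩ := List.append_of_mem ha
      exact ⟨[], a, s, u, rfl⟩
    · have ht : ¬t.Nodup := fun hnd => h (List.nodup_cons.2 ⟨ha, hnd⟩)
      obtain ⟨l₁, v, l₂, l₃, rfl⟩ := ih ht
      exact ⟨a :: l₁, v, l₂, l₃, rfl⟩

lemma master (hx0 : Feas Γ γ x0) (hx : Feas Γ γ x) :
    ∀ (m : ℕ) (a : V) (p : List V), p.length ≤ m → List.Chain (HStep Γ) a p →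
      ww x0 x a - Bc Γ γ x0 ≤ Wt Γ γ x a p + ww x0 x (endV a p) := by
  intro m
  induction m with
  | zero =>
    intro a p hp _
    have hpnil : p = [] := List.length_eq_zero_iff.1 (Nat.le_zero.1 hp)
    subst hpnil
    simp only [Wt, endV, zero_add]
    linarith [Bc_nonneg (Γ := Γ) (γ := γ) (x0 := x0)]
  | succ m ih =>
    intro a p hp hch
    by_cases hnd : (a :: p).Nodup
    · have h1 := lemmaA hx0 hx a p hch
      have h2 := Rsum_le (Γ := Γ) (γ := γ) (x0 := x0) a p hnd
      linarith
    · obtain ⟨l₁, v, l₂, l₃, heq⟩ := exists_dup _ hnd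
      cases l₁ with
      | nil =>
        rw [List.nil_append] at heq
        injection heq with h1 h2
        subst h1; subst h2
        have hsplit := (List.isChain_cons_split (l₁ := l₂) (c := a) (l₂ := l₃)).1 hch
        have hlen : l₃.length ≤ m := by
          have := hp; simp only [List.length_append, List.length_cons] at this; omega
        have hih := ih a l₃ hlen hsplit.2
        have hwt : Wt Γ γ x a (l₂ ++ a :: l₃)
            = Wt Γ γ x a l₂ + (om Γ γ x (endV a l₂) a + Wt Γ γ x a l₃) := by
          rw [Wt_append]; simp only [Wt]
        have hend : endV a (l₂ ++ a :: l₃) = endV a l₃ := by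
          rw [endV_append]; simp only [endV]
        rw [hwt, hend]
        have h1 := Wt_nonneg hx a l₂
        have h2 := om_nonneg hx (endV a l₂) a
        linarith
      | cons b t =>
        rw [List.cons_append] at heq
        injection heq with h1 h2
        subst h1; subst h2
        have hsplit : List.Chain (HStep Γ) a (t ++ [v]) ∧
            List.Chain (HStep Γ) v (l₂ ++ v :: l₃) :=
          (List.isChain_cons_split (l₁ := t) (c := v) (l₂ := l₂ ++ v :: l₃)).1 hch
        have hsplit2 : List.Chain (HStep Γ) v (l₂ ++ [v]) ∧ List.Chain (HStep Γ) v l₃ :=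
          (List.isChain_cons_split (l₁ := l₂) (c := v) (l₂ := l₃)).1 hsplit.2
        have hch' : List.Chain (HStep Γ) a (t ++ v :: l₃) :=
          (List.isChain_cons_split (l₁ := t) (c := v) (l₂ := l₃)).2 ⟨hsplit.1, hsplit2.2⟩
        have hlen : (t ++ v :: l₃).length ≤ m := by
          have := hp
          simp only [List.length_append, List.length_cons] at this ⊢
          omega
        have hih := ih a (t ++ v :: l₃) hlen hch'
        have hwt1 : Wt Γ γ x a (t ++ v :: (l₂ ++ v :: l₃))
            = Wt Γ γ x a t + (om Γ γ x (endV a t) v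
              + (Wt Γ γ x v l₂ + (om Γ γ x (endV v l₂) v + Wt Γ γ x v l₃))) := by
          rw [Wt_append]; simp only [Wt]; rw [Wt_append]; simp only [Wt]
        have hwt2 : Wt Γ γ x a (t ++ v :: l₃)
            = Wt Γ γ x a t + (om Γ γ x (endV a t) v + Wt Γ γ x v l₃) := by
          rw [Wt_append]; simp only [Wt]
        have hend1 : endV a (t ++ v :: (l₂ ++ v :: l₃)) = endV v l₃ := by
          rw [endV_append]; simp only [endV]; rw [endV_append]; simp only [endV]
        have hend2 : endV a (t ++ v :: l₃) = endV v l₃ := by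
          rw [endV_append]; simp only [endV]
        rw [hwt1, hend1]
        rw [hwt2, hend2] at hih
        have h1 := Wt_nonneg hx v l₂
        have h2 := om_nonneg hx (endV v l₂) v
        linarith

end lemmas

/-- The set of values achievable by walks starting at `a`. -/
def SS (a : V) : Set ℝ :=
  {r | ∃ p : List V, List.Chain (HStep Γ) a p ∧ Wt Γ γ x a p + ww x0 x (endV a p) = r}

/-- The correction potential. -/
def cc (a : V) : ℝ := sInf (SS Γ γ x0 x a)

section cclemmas

variable {Γ γ x0 x}

lemma SS_nonempty (a : V) : (SS Γ γ x0 x a).Nonempty :=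
  ⟨ww x0 x a, [], List.Chain.nil, by simp [Wt, endV]⟩

lemma SS_lb (hx0 : Feas Γ γ x0) (hx : Feas Γ γ x) (a : V) :
    ∀ r ∈ SS Γ γ x0 x a, ww x0 x a - Bc Γ γ x0 ≤ r := by
  rintro r ⟨p, hch, rfl⟩
  exact master hx0 hx p.length a p le_rfl hch

lemma SS_bddBelow (hx0 : Feas Γ γ x0) (hx : Feas Γ γ x) (a : V) :
    BddBelow (SS Γ γ x0 x a) :=
  ⟨ww x0 x a - Bc Γ γ x0, fun r hr => SS_lb hx0 hx a r hr⟩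

lemma cc_le_ww (hx0 : Feas Γ γ x0) (hx : Feas Γ γ x) (a : V) :
    cc Γ γ x0 x a ≤ ww x0 x a :=
  csInf_le (SS_bddBelow hx0 hx a) ⟨[], List.Chain.nil, by simp [Wt, endV]⟩

lemma ww_sub_le_cc (hx0 : Feas Γ γ x0) (hx : Feas Γ γ x) (a : V) :
    ww x0 x a - Bc Γ γ x0 ≤ cc Γ γ x0 x a :=
  le_csInf (SS_nonempty a) (SS_lb hx0 hx a)

lemma cc_triangle (hx0 : Feas Γ γ x0) (hx : Feas Γ γ x) {a b : V} (h : HStep Γ a b) :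
    cc Γ γ x0 x a ≤ om Γ γ x a b + cc Γ γ x0 x b := by
  have key : ∀ r ∈ SS Γ γ x0 x b, cc Γ γ x0 x a - om Γ γ x a b ≤ r := by
    rintro r ⟨p, hch, rfl⟩
    have hmem : om Γ γ x a b + (Wt Γ γ x b p + ww x0 x (endV b p)) ∈ SS Γ γ x0 x a :=
      ⟨b :: p, List.chain_cons.2 ⟨h, hch⟩, by simp only [Wt, endV]; ring⟩
    have := csInf_le (SS_bddBelow hx0 hx a) hmem
    unfold cc
    linarith
  have := le_csInf (SS_nonempty b) key
  unfold cc at *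
  linarith

lemma cc_cone (hx0 : Feas Γ γ x0) (hx : Feas Γ γ x) {a b : V} (h : (a, b) ∈ Γ) :
    cc Γ γ x0 x b ≤ cc Γ γ x0 x a := by
  have := cc_triangle hx0 hx (Or.inr h : HStep Γ b a)
  have hom : om Γ γ x b a = 0 := by unfold om; rw [if_pos h]
  rw [hom, zero_add] at this
  exact this

lemma cc_slack (hx0 : Feas Γ γ x0) (hx : Feas Γ γ x) {a b : V} (h : (a, b) ∈ Γ) :
    cc Γ γ x0 x a ≤ sig γ x (a, b) + cc Γ γ x0 x b := by
  have htri := cc_triangle hx0 hx (Or.inl h : HStep Γ a b)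
  have hom : om Γ γ x a b ≤ sig γ x (a, b) := by
    unfold om
    split
    · exact sig_nonneg hx h
    · simp [h]
  linarith

end cclemmas

end LNatAux

namespace LNatAux

variable {n : ℕ}

/-- Extended edge set over `Option (Fin n)` (with `none` as base vertex). -/
def EE (I J : Set (Fin n)) (E : Set (Fin n × Fin n)) :
    Set (Option (Fin n) × Option (Fin n)) :=
  {e | (∃ i ∈ I, e = (some i, none)) ∨ (∃ j ∈ J, e = (none, some j)) ∨
    (∃ p ∈ E, e = (some p.1, some p.2))}

/-- Extended edge weights. -/
def gam (l u : Fin n → ℤ) (dd : Fin n × Fin n → ℤ) :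
    Option (Fin n) × Option (Fin n) → ℝ
  | (some i, none) => -(l i : ℝ)
  | (none, some j) => (u j : ℝ)
  | (some i, some j) => (dd (i, j) : ℝ)
  | (none, none) => 0

/-- Extension of a vector by a `0` base coordinate. -/
def ext (x : Fin n → ℝ) : Option (Fin n) → ℝ := fun v => v.elim 0 x

lemma feas_ext {I J : Set (Fin n)} {E : Set (Fin n × Fin n)} {l u : Fin n → ℤ}
    {dd : Fin n × Fin n → ℤ} {x : Fin n → ℝ}
    (h1 : ∀ i ∈ I, (l i : ℝ) ≤ x i) (h2 : ∀ j ∈ J, x j ≤ (u j : ℝ))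
    (h3 : ∀ p ∈ E, x p.2 - x p.1 ≤ (dd p : ℝ)) :
    Feas (EE I J E) (gam l u dd) (ext x) := by
  rintro e (⟨i, hi, rfl⟩ | ⟨j, hj, rfl⟩ | ⟨p, hp, rfl⟩)
  · show (0 : ℝ) - x i ≤ -(l i : ℝ)
    linarith [h1 i hi]
  · show x j - 0 ≤ (u j : ℝ)
    linarith [h2 j hj]
  · show x p.2 - x p.1 ≤ ((dd (p.1, p.2) : ℤ) : ℝ)
    simpa using h3 p hp

end LNatAux

/-- Every L♮-convex polyhedron `P ⊆ ℝ^n` decomposes as `P = Q + C` with a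
bounded L♮-convex polyhedron `Q` and an L♮-convex cone `C`. -/
theorem lnatPolyhedron_decomposition {n : ℕ} (P : Set (Fin n → ℝ))
    (hP : IsLNatPolyhedron P) :
    ∃ Q C : Set (Fin n → ℝ),
      IsLNatPolyhedron Q ∧ Bornology.IsBounded Q ∧
      IsLNatPolyhedron C ∧ IsConeSet C ∧
      P = Q + C := by
  classical
  obtain ⟨⟨x0, hx0P⟩, I, J, E, l, u, dd, hPeq⟩ := hP
  have hx0c : (∀ i ∈ I, (l i : ℝ) ≤ x0 i) ∧ (∀ j ∈ J, x0 j ≤ (u j : ℝ)) ∧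
      (∀ p ∈ E, x0 p.2 - x0 p.1 ≤ (dd p : ℝ)) := by
    rw [hPeq] at hx0P; exact hx0P
  have hfeas0 : LNatAux.Feas (LNatAux.EE I J E) (LNatAux.gam l u dd) (LNatAux.ext x0) :=
    LNatAux.feas_ext hx0c.1 hx0c.2.1 hx0c.2.2
  set B := LNatAux.Bc (LNatAux.EE I J E) (LNatAux.gam l u dd) (LNatAux.ext x0) with hBdef
  have hB0 : 0 ≤ B := LNatAux.Bc_nonneg
  set K : ℤ := ⌈B⌉ with hKdef
  have hBK : B ≤ (K : ℝ) := Int.le_ceil B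
  have hK0 : (0 : ℝ) ≤ (K : ℝ) := le_trans hB0 hBK
  set Lq : Fin n → ℤ := fun i => ⌊x0 i⌋ - K with hLq
  set Uq : Fin n → ℤ := fun i => ⌈x0 i⌉ + K with hUq
  have hLqB : ∀ i, (Lq i : ℝ) ≤ x0 i - B := by
    intro i
    have h1 := Int.floor_le (x0 i)
    simp only [hLq]
    push_cast
    linarith
  have hUqB : ∀ i, x0 i + B ≤ (Uq i : ℝ) := by
    intro i
    have h1 := Int.le_ceil (x0 i)
    simp only [hUq]
    push_cast
    linarith
  have hmemI : ∀ i ∈ I, ((some i : Option (Fin n)), (none : Option (Fin n)))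
      ∈ LNatAux.EE I J E := fun i hi => Or.inl ⟨i, hi, rfl⟩
  have hmemJ : ∀ j ∈ J, ((none : Option (Fin n)), (some j : Option (Fin n)))
      ∈ LNatAux.EE I J E := fun j hj => Or.inr (Or.inl ⟨j, hj, rfl⟩)
  have hmemE : ∀ p ∈ E, ((some p.1 : Option (Fin n)), (some p.2 : Option (Fin n)))
      ∈ LNatAux.EE I J E := fun p hp => Or.inr (Or.inr ⟨p, hp, rfl⟩)
  refine ⟨P ∩ {y | ∀ i, (Lq i : ℝ) ≤ y i ∧ y i ≤ (Uq i : ℝ)},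
    {c | (∀ i ∈ I, 0 ≤ c i) ∧ (∀ j ∈ J, c j ≤ 0) ∧ (∀ p ∈ E, c p.2 - c p.1 ≤ 0)},
    ?_, ?_, ?_, ?_, ?_⟩
  · -- `Q` is an L♮ polyhedron
    have hx0Q : x0 ∈ P ∩ {y | ∀ i, (Lq i : ℝ) ≤ y i ∧ y i ≤ (Uq i : ℝ)} := by
      refine ⟨hx0P, fun i => ⟨?_, ?_⟩⟩
      · linarith [hLqB i]
      · linarith [hUqB i]
    refine ⟨⟨x0, hx0Q⟩, Set.univ, Set.univ, E,
      (fun i => if i ∈ I then max (l i) (Lq i) else Lq i),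
      (fun j => if j ∈ J then min (u j) (Uq j) else Uq j), dd, ?_⟩
    ext y
    constructor
    · rintro ⟨hyP, hybox⟩
      rw [hPeq] at hyP
      refine ⟨fun i _ => ?_, fun j _ => ?_, hyP.2.2⟩
      · by_cases hi : i ∈ I
        · simp only [if_pos hi]
          push_cast
          exact max_le (hyP.1 i hi) (hybox i).1
        · simp only [if_neg hi]
          exact (hybox i).1
      · by_cases hj : j ∈ J
        · simp only [if_pos hj]
          push_cast
          exact le_min (hyP.2.1 j hj) (hybox j).2
        · simp only [if_neg hj]
          exact (hybox j).2
    · rintro ⟨h1, h2, h3⟩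
      have hbox : ∀ i, (Lq i : ℝ) ≤ y i ∧ y i ≤ (Uq i : ℝ) := by
        intro i
        constructor
        · have := h1 i (Set.mem_univ i)
          by_cases hi : i ∈ I
          · simp only [if_pos hi] at this
            push_cast at this
            exact le_trans (le_max_right _ _) this
          · simpa only [if_neg hi] using this
        · have := h2 i (Set.mem_univ i)
          by_cases hi : i ∈ J
          · simp only [if_pos hi] at this
            push_cast at this
            exact le_trans this (min_le_right _ _)
          · simpa only [if_neg hi] using this
      refine ⟨?_, hbox⟩
      rw [hPeq]
      refine ⟨fun i hi => ?_, fun j hj => ?_, h3⟩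
      · have := h1 i (Set.mem_univ i)
        simp only [if_pos hi] at this
        push_cast at this
        exact le_trans (le_max_left _ _) this
      · have := h2 j (Set.mem_univ j)
        simp only [if_pos hj] at this
        push_cast at this
        exact le_trans this (min_le_left _ _)
  · -- bounded
    have hsub : P ∩ {y | ∀ i, (Lq i : ℝ) ≤ y i ∧ y i ≤ (Uq i : ℝ)}
        ⊆ Set.pi Set.univ (fun i => Set.Icc ((Lq i : ℝ)) ((Uq i : ℝ))) := by
      intro y hy i _
      exact ⟨(hy.2 i).1, (hy.2 i).2⟩
    exact (Bornology.IsBounded.pi (fun i => Metric.isBounded_Icc _ _)).subset hsub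
  · -- `C` is an L♮ polyhedron
    refine ⟨⟨0, ?_⟩, I, J, E, 0, 0, 0, ?_⟩
    · refine ⟨fun i _ => le_refl _, fun j _ => le_refl _, fun p _ => by simp⟩
    · ext c
      simp
  · -- `C` is a cone
    rintro c ⟨hc1, hc2, hc3⟩ lam hlam
    refine ⟨fun i hi => ?_, fun j hj => ?_, fun p hp => ?_⟩
    · have : (lam • c) i = lam * c i := rfl
      rw [this]
      exact mul_nonneg hlam (hc1 i hi)
    · have : (lam • c) j = lam * c j := rfl
      rw [this]
      nlinarith [hc2 j hj]
    · have ha : (lam • c) p.2 = lam * c p.2 := rfl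
      have hb : (lam • c) p.1 = lam * c p.1 := rfl
      rw [ha, hb]
      nlinarith [hc3 p hp]
  · -- decomposition
    ext x
    constructor
    · intro hx
      have hxc : (∀ i ∈ I, (l i : ℝ) ≤ x i) ∧ (∀ j ∈ J, x j ≤ (u j : ℝ)) ∧
          (∀ p ∈ E, x p.2 - x p.1 ≤ (dd p : ℝ)) := by
        rw [hPeq] at hx; exact hx
      have hfeasx : LNatAux.Feas (LNatAux.EE I J E) (LNatAux.gam l u dd) (LNatAux.ext x) :=
        LNatAux.feas_ext hxc.1 hxc.2.1 hxc.2.2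
      set cf := LNatAux.cc (LNatAux.EE I J E) (LNatAux.gam l u dd)
        (LNatAux.ext x0) (LNatAux.ext x) with hcf
      have hcone : ∀ {a b : Option (Fin n)}, (a, b) ∈ LNatAux.EE I J E → cf b ≤ cf a :=
        fun h => LNatAux.cc_cone hfeas0 hfeasx h
      have hslack : ∀ {a b : Option (Fin n)}, (a, b) ∈ LNatAux.EE I J E →
          cf a ≤ LNatAux.sig (LNatAux.gam l u dd) (LNatAux.ext x) (a, b) + cf b :=
        fun h => LNatAux.cc_slack hfeas0 hfeasx h
      have hwws : ∀ i : Fin n,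
          LNatAux.ww (LNatAux.ext x0) (LNatAux.ext x) (some i) = x i - x0 i := fun i => rfl
      have hwwn : LNatAux.ww (LNatAux.ext x0) (LNatAux.ext x) (none : Option (Fin n)) = 0 := by
        simp [LNatAux.ww, LNatAux.ext]
      have hub : ∀ a, cf a ≤ LNatAux.ww (LNatAux.ext x0) (LNatAux.ext x) a :=
        LNatAux.cc_le_ww hfeas0 hfeasx
      have hlb : ∀ a, LNatAux.ww (LNatAux.ext x0) (LNatAux.ext x) a - B ≤ cf a :=
        LNatAux.ww_sub_le_cc hfeas0 hfeasx
      set cv : Fin n → ℝ := fun i => cf (some i) - cf none with hcv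
      have hsigI : ∀ i : Fin n, LNatAux.sig (LNatAux.gam l u dd) (LNatAux.ext x)
          ((some i : Option (Fin n)), none) = -(l i : ℝ) - (0 - x i) := fun i => rfl
      have hsigJ : ∀ j : Fin n, LNatAux.sig (LNatAux.gam l u dd) (LNatAux.ext x)
          ((none : Option (Fin n)), some j) = (u j : ℝ) - (x j - 0) := fun j => rfl
      have hsigE : ∀ p : Fin n × Fin n, LNatAux.sig (LNatAux.gam l u dd) (LNatAux.ext x)
          ((some p.1 : Option (Fin n)), some p.2) = (dd (p.1, p.2) : ℝ) - (x p.2 - x p.1) :=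
        fun p => rfl
      refine Set.mem_add.2 ⟨fun i => x i - cv i, ⟨?_, ?_⟩, cv, ⟨?_, ?_, ?_⟩, ?_⟩
      · -- q ∈ P
        rw [hPeq]
        refine ⟨fun i hi => ?_, fun j hj => ?_, fun p hp => ?_⟩
        · have h := hslack (hmemI i hi)
          rw [hsigI i] at h
          simp only [hcv]
          linarith
        · have h := hslack (hmemJ j hj)
          rw [hsigJ j] at h
          simp only [hcv]
          linarith
        · have h := hslack (hmemE p hp)
          rw [hsigE p] at h
          simp only [hcv]
          have : ((dd (p.1, p.2) : ℤ) : ℝ) = (dd p : ℝ) := by rw [Prod.mk.eta]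
          rw [this] at h
          linarith
      · -- q in the box
        intro i
        have h1 := hub (some i)
        have h2 := hlb (some i)
        have h3 := hub (none : Option (Fin n))
        have h4 := hlb (none : Option (Fin n))
        rw [hwws i] at h1 h2
        rw [hwwn] at h3 h4
        have hL := hLqB i
        have hU := hUqB i
        simp only [hcv]
        constructor
        · linarith
        · linarith
      · intro i hi
        have h := hcone (hmemI i hi)
        simp only [hcv]
        linarith
      · intro j hj
        have h := hcone (hmemJ j hj)
        simp only [hcv]
        linarith
      · intro p hp
        have h := hcone (hmemE p hp)
        simp only [hcv]
        linarith
      · funext i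
        show x i - cv i + cv i = x i
        ring
    · intro hx
      obtain ⟨q, hq, c, hc, rfl⟩ := Set.mem_add.1 hx
      have hqP := hq.1
      rw [hPeq] at hqP ⊢
      refine ⟨fun i hi => ?_, fun j hj => ?_, fun p hp => ?_⟩
      · have h1 := hqP.1 i hi
        have h2 := hc.1 i hi
        have : (q + c) i = q i + c i := rfl
        rw [this]
        linarith
      · have h1 := hqP.2.1 j hj
        have h2 := hc.2.1 j hj
        have : (q + c) j = q j + c j := rfl
        rw [this]
        linarith
      · have h1 := hqP.2.2 p hp
        have h2 := hc.2.2 p hp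
        have ha : (q + c) p.2 = q p.2 + c p.2 := rfl
        have hb : (q + c) p.1 = q p.1 + c p.1 := rfl
        rw [ha, hb]
        linarith
end
end

section
/- Every L♮-convex set S ⊆ ℤ^n can be represented as S = T + G, where T is a bounded L♮-convex set, G is a conic L♮-convex set, and T + G denotes the Minkowski sum in ℤ^n. -/
open Set Pointwise

noncomputable section

open Finset

namespace LNatAux

/-- ceiling of d/2 -/
def c2 (d : ℤ) : ℤ := ⌈(d : ℚ) / 2⌉
/-- floor of d/2 -/
def f2 (d : ℤ) : ℤ := ⌊(d : ℚ) / 2⌋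

lemma ceil_mid_eq (a b : ℤ) : ⌈(a + b : ℚ) / 2⌉ = a + c2 (b - a) := by
  have : (a + b : ℚ) / 2 = ((b - a : ℤ) : ℚ) / 2 + (a : ℤ) := by push_cast; ring
  rw [this, Int.ceil_add_intCast, c2]; ring

lemma floor_mid_eq (a b : ℤ) : ⌊(a + b : ℚ) / 2⌋ = a + f2 (b - a) := by
  have : (a + b : ℚ) / 2 = ((b - a : ℤ) : ℚ) / 2 + (a : ℤ) := by push_cast; ring
  rw [this, Int.floor_add_intCast, f2]; ring

lemma c2_le_self {d : ℤ} (h : 0 ≤ d) : c2 d ≤ d := by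
  rw [c2, Int.ceil_le]; push_cast
  have : (0:ℚ) ≤ d := by exact_mod_cast h
  linarith

lemma one_le_c2 {d : ℤ} (h : 1 ≤ d) : 1 ≤ c2 d := by
  rw [c2]
  have : (0:ℤ) < ⌈(d:ℚ)/2⌉ := by
    rw [Int.lt_ceil]
    have : (1:ℚ) ≤ d := by exact_mod_cast h
    norm_num; linarith
  omega

lemma c2_lt_self {d : ℤ} (h : 2 ≤ d) : c2 d < d := by
  have : c2 d ≤ d - 1 := by
    rw [c2, Int.ceil_le]; push_cast
    have : (2:ℚ) ≤ d := by exact_mod_cast h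
    linarith
  omega

lemma c2_nonpos {d : ℤ} (h : d ≤ 0) : c2 d ≤ 0 := by
  rw [c2, Int.ceil_le]; push_cast
  have : (d:ℚ) ≤ 0 := by exact_mod_cast h
  linarith

lemma le_c2 {d : ℤ} (h : d ≤ 0) : d ≤ c2 d := by
  have := Int.le_ceil ((d:ℚ)/2)
  rw [c2]
  have hd : (d:ℚ) ≤ (d:ℚ)/2 := by
    have : (d:ℚ) ≤ 0 := by exact_mod_cast h
    linarith
  have : (d:ℚ) ≤ ⌈(d:ℚ)/2⌉ := le_trans hd this
  exact_mod_cast this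

lemma lt_c2 {d : ℤ} (h : d ≤ -1) : d < c2 d := by
  have : (d:ℤ) < ⌈(d:ℚ)/2⌉ := by
    rw [Int.lt_ceil]
    have : (d:ℚ) ≤ -1 := by exact_mod_cast h
    linarith
  exact this

lemma f2_eq_neg_c2_neg (d : ℤ) : f2 d = - c2 (-d) := by
  rw [f2, c2]
  have : ((-d : ℤ) : ℚ)/2 = -((d:ℚ)/2) := by push_cast; ring
  rw [this, Int.ceil_neg]; ring

lemma c2_mono {d e : ℤ} (h : d ≤ e) : c2 d ≤ c2 e := by
  apply Int.ceil_le_ceil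
  have : (d:ℚ) ≤ e := by exact_mod_cast h
  linarith

lemma f2_mono {d e : ℤ} (h : d ≤ e) : f2 d ≤ f2 e := by
  apply Int.floor_le_floor
  have : (d:ℚ) ≤ e := by exact_mod_cast h
  linarith

lemma c2_two_mul (m : ℤ) : c2 (2*m) = m := by
  rw [c2]
  have : ((2*m : ℤ):ℚ)/2 = (m:ℚ) := by push_cast; ring
  rw [this, Int.ceil_intCast]

lemma c2_two_mul_add_one (m : ℤ) : c2 (2*m+1) = m + 1 := by
  rw [c2]
  have : ((2*m+1 : ℤ):ℚ)/2 = 1/2 + (m:ℚ) := by push_cast; ring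
  rw [this]
  have : ⌈(1/2 + (m:ℤ) : ℚ)⌉ = ⌈(1/2 : ℚ)⌉ + m := by
    exact_mod_cast Int.ceil_add_intCast (1/2 : ℚ) m
  rw [show (1/2 + (m:ℚ)) = (1/2 + (m:ℤ) : ℚ) by push_cast; ring, this]
  have : ⌈(1/2 : ℚ)⌉ = 1 := by norm_num [Int.ceil_eq_iff]
  omega

lemma f2_two_mul (m : ℤ) : f2 (2*m) = m := by
  rw [f2_eq_neg_c2_neg, show -(2*m) = 2*(-m) by ring, c2_two_mul]; ring

lemma f2_two_mul_add_one (m : ℤ) : f2 (2*m+1) = m := by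
  rw [f2_eq_neg_c2_neg, show -(2*m+1) = 2*(-m-1)+1 by ring, c2_two_mul_add_one]; ring

end LNatAux
namespace LNatAux

variable {n : ℕ}

/-- characteristic vector of a finset -/
def chi (C : Finset (Fin n)) : Fin n → ℤ := fun i => if i ∈ C then 1 else 0

/-- the "interval/difference" closure condition -/
def HzP (S : Set (Fin n → ℤ)) (z : Fin n → ℤ) : Prop :=
  (∀ i, ∃ y ∈ S, y i ≤ z i) ∧ (∀ i, ∃ y ∈ S, z i ≤ y i) ∧
  (∀ i j, ∃ y ∈ S, z j - z i ≤ y j - y i)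

lemma hzP_of_mem {S : Set (Fin n → ℤ)} {z : Fin n → ℤ} (hz : z ∈ S) : HzP S z :=
  ⟨fun i => ⟨z, hz, le_refl _⟩, fun i => ⟨z, hz, le_refl _⟩, fun i j => ⟨z, hz, le_refl _⟩⟩

/-- ceil midpoint -/
def cmid (x y : Fin n → ℤ) : Fin n → ℤ := fun i => ⌈(x i + y i : ℚ) / 2⌉
def fmid (x y : Fin n → ℤ) : Fin n → ℤ := fun i => ⌊(x i + y i : ℚ) / 2⌋

lemma cmid_mem {S : Set (Fin n → ℤ)} (hS : IsLNatSet S) {x y : Fin n → ℤ}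
    (hx : x ∈ S) (hy : y ∈ S) : cmid x y ∈ S := (hS.2 x hx y hy).1

lemma fmid_mem {S : Set (Fin n → ℤ)} (hS : IsLNatSet S) {x y : Fin n → ℤ}
    (hx : x ∈ S) (hy : y ∈ S) : fmid x y ∈ S := (hS.2 x hx y hy).2

lemma cmid_apply (x y : Fin n → ℤ) (i : Fin n) : cmid x y i = x i + c2 (y i - x i) :=
  ceil_mid_eq _ _

lemma fmid_apply (x y : Fin n → ℤ) (i : Fin n) : fmid x y i = x i + f2 (y i - x i) :=
  floor_mid_eq _ _

/-- the negated set -/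
def Sneg (S : Set (Fin n → ℤ)) : Set (Fin n → ℤ) := {v | -v ∈ S}

lemma mem_Sneg {S : Set (Fin n → ℤ)} {v : Fin n → ℤ} : v ∈ Sneg S ↔ -v ∈ S := Iff.rfl

lemma Sneg_lnat {S : Set (Fin n → ℤ)} (hS : IsLNatSet S) : IsLNatSet (Sneg S) := by
  constructor
  · obtain ⟨x, hx⟩ := hS.1
    exact ⟨-x, by simp [Sneg, hx]⟩
  · intro x hx y hy
    constructor
    · show -(fun i => ⌈(x i + y i : ℚ) / 2⌉) ∈ S
      have : -(fun i => ⌈(x i + y i : ℚ) / 2⌉) = fun i => ⌊((-x) i + (-y) i : ℚ) / 2⌋ := by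
        funext i
        have e : ((((-x) i : ℤ) : ℚ) + (((-y) i : ℤ) : ℚ)) / 2
            = -(((x i : ℚ) + (y i : ℚ))/2) := by
          simp only [Pi.neg_apply]; push_cast; ring
        simp only [Pi.neg_apply] at e ⊢
        rw [e, Int.floor_neg]
      rw [this]
      exact (hS.2 _ hx _ hy).2
    · show -(fun i => ⌊(x i + y i : ℚ) / 2⌋) ∈ S
      have : -(fun i => ⌊(x i + y i : ℚ) / 2⌋) = fun i => ⌈((-x) i + (-y) i : ℚ) / 2⌉ := by
        funext i
        have e : ((((-x) i : ℤ) : ℚ) + (((-y) i : ℤ) : ℚ)) / 2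
            = -(((x i : ℚ) + (y i : ℚ))/2) := by
          simp only [Pi.neg_apply]; push_cast; ring
        simp only [Pi.neg_apply] at e ⊢
        rw [e, Int.ceil_neg]
      rw [this]
      exact (hS.2 _ hx _ hy).1

lemma Sneg_hzP {S : Set (Fin n → ℤ)} {z : Fin n → ℤ} (hz : HzP S z) : HzP (Sneg S) (-z) := by
  refine ⟨fun i => ?_, fun i => ?_, fun i j => ?_⟩
  · obtain ⟨y, hy, h⟩ := hz.2.1 i
    exact ⟨-y, by simpa [Sneg] using hy, by simpa using h⟩
  · obtain ⟨y, hy, h⟩ := hz.1 i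
    exact ⟨-y, by simpa [Sneg] using hy, by simpa using h⟩
  · obtain ⟨y, hy, h⟩ := hz.2.2 j i
    refine ⟨-y, by simpa [Sneg] using hy, ?_⟩
    simp only [Pi.neg_apply]
    omega

end LNatAux
namespace LNatAux

variable {n : ℕ}

def mu1 (x y : Fin n → ℤ) : ℕ := ∑ i, ((y i - x i - 1).toNat + (x i - y i).toNat)

lemma lemmaC_aux {S : Set (Fin n → ℤ)} (hS : IsLNatSet S) {x : Fin n → ℤ} (hx : x ∈ S) :
    ∀ N : ℕ, ∀ y ∈ S, mu1 x y ≤ N →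
    (fun i => x i + chi (Finset.univ.filter (fun i => x i < y i)) i) ∈ S := by
  intro N
  induction N with
  | zero =>
    intro y hy hmu
    have h0 : ∀ i, (y i - x i - 1).toNat + (x i - y i).toNat = 0 := by
      intro i
      have := Finset.sum_le_sum_of_subset (Finset.subset_univ {i})
        (f := fun i => (y i - x i - 1).toNat + (x i - y i).toNat)
      simp only [Finset.sum_singleton] at this
      rw [mu1] at hmu
      omega
    have : (fun i => x i + chi (Finset.univ.filter (fun i => x i < y i)) i) = y := by
      funext i
      have := h0 i
      simp only [chi, Finset.mem_filter, Finset.mem_univ, true_and]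
      by_cases h : x i < y i <;> simp [h] <;> omega
    rw [this]; exact hy
  | succ N ih =>
    intro y hy hmu
    by_cases h0 : mu1 x y = 0
    · exact ih y hy (by omega)
    · -- step
      set y' := cmid x y with hy'
      have hy'S : y' ∈ S := cmid_mem hS hx hy
      have hcoord : ∀ i, y' i - x i = c2 (y i - x i) := by
        intro i; rw [hy', cmid_apply]; ring
      have hfilter : (Finset.univ.filter (fun i => x i < y' i))
          = (Finset.univ.filter (fun i => x i < y i)) := by
        apply Finset.filter_congr
        intro i _
        have hc := hcoord i
        constructor
        · intro h
          by_contra hn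
          have : y i - x i ≤ 0 := by omega
          have := c2_nonpos this
          omega
        · intro h
          have : 1 ≤ y i - x i := by omega
          have := one_le_c2 this
          omega
      have hmono : ∀ i, (y' i - x i - 1).toNat + (x i - y' i).toNat
          ≤ (y i - x i - 1).toNat + (x i - y i).toNat := by
        intro i
        have hc := hcoord i
        rcases le_or_gt (y i - x i) 0 with h | h
        · have h1 := c2_nonpos h
          have h2 := le_c2 h
          omega
        · have h1 := one_le_c2 h
          have h2 := c2_le_self (by omega : (0:ℤ) ≤ y i - x i)
          omega
      have hstrict : ∃ i, (y' i - x i - 1).toNat + (x i - y' i).toNat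
          < (y i - x i - 1).toNat + (x i - y i).toNat := by
        have : ∃ i, (y i - x i - 1).toNat + (x i - y i).toNat ≠ 0 := by
          by_contra hc
          push_neg at hc
          exact h0 (Finset.sum_eq_zero (fun i _ => hc i))
        obtain ⟨i, hi⟩ := this
        refine ⟨i, ?_⟩
        have hc := hcoord i
        rcases le_or_gt (y i - x i) 0 with h | h
        · have hd : y i - x i ≤ -1 := by omega
          have h1 := lt_c2 hd
          have h2 := c2_nonpos h
          omega
        · have hd : 2 ≤ y i - x i := by
            rcases lt_or_ge (y i - x i) 2 with h2 | h2
            · exfalso; have : y i - x i = 1 := by omega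
              omega
            · exact h2
          have h1 := c2_lt_self hd
          have h2 := one_le_c2 (by omega : (1:ℤ) ≤ y i - x i)
          omega
      have hlt : mu1 x y' < mu1 x y := by
        obtain ⟨i, hi⟩ := hstrict
        exact Finset.sum_lt_sum (fun j _ => hmono j) ⟨i, Finset.mem_univ i, hi⟩
      have := ih y' hy'S (by omega)
      rwa [hfilter] at this

/-- Lemma C: rounding up towards any other point stays in S. -/
lemma lemmaC {S : Set (Fin n → ℤ)} (hS : IsLNatSet S) {x y : Fin n → ℤ}
    (hx : x ∈ S) (hy : y ∈ S) :
    (fun i => x i + chi (Finset.univ.filter (fun i => x i < y i)) i) ∈ S :=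
  lemmaC_aux hS hx (mu1 x y) y hy le_rfl

/-- Lemma C': rounding down towards any other point stays in S. -/
lemma lemmaC' {S : Set (Fin n → ℤ)} (hS : IsLNatSet S) {x y : Fin n → ℤ}
    (hx : x ∈ S) (hy : y ∈ S) :
    (fun i => x i - chi (Finset.univ.filter (fun i => y i < x i)) i) ∈ S := by
  have hneg := lemmaC (Sneg_lnat hS) (x := -x) (y := -y)
    (by simpa [Sneg] using hx) (by simpa [Sneg] using hy)
  have hfe : (Finset.univ.filter (fun i => (-x) i < (-y) i))
      = (Finset.univ.filter (fun i => y i < x i)) := by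
    apply Finset.filter_congr; intro i _
    simp only [Pi.neg_apply, eq_iff_iff]
    omega
  rw [hfe] at hneg
  rw [mem_Sneg] at hneg
  have : -(fun i => (-x) i + chi (Finset.univ.filter (fun i => y i < x i)) i)
      = (fun i => x i - chi (Finset.univ.filter (fun i => y i < x i)) i) := by
    funext i; simp only [Pi.neg_apply]; ring
  rwa [this] at hneg

end LNatAux
namespace LNatAux

variable {n : ℕ}

lemma c2_zero : c2 0 = 0 := by simpa using c2_two_mul 0
lemma c2_one : c2 1 = 1 := by simpa using c2_two_mul_add_one 0
lemma c2_neg_one : c2 (-1) = 0 := by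
  have := c2_two_mul_add_one (-1); norm_num at this; exact this
lemma f2_zero : f2 0 = 0 := by simpa using f2_two_mul 0
lemma f2_one : f2 1 = 0 := by simpa using f2_two_mul_add_one 0
lemma f2_neg_one : f2 (-1) = -1 := by
  have := f2_two_mul_add_one (-1); norm_num at this; exact this
lemma f2_two : f2 2 = 1 := by simpa using f2_two_mul 1

/-- `C` is a valid "down set": x - χ_C ∈ S -/
def Csub (S : Set (Fin n → ℤ)) (x : Fin n → ℤ) (C : Finset (Fin n)) : Prop :=
  (fun i => x i - chi C i) ∈ S

def Dadd (S : Set (Fin n → ℤ)) (x : Fin n → ℤ) (B : Finset (Fin n)) : Prop :=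
  (fun i => x i + chi B i) ∈ S

lemma chi_mem {C : Finset (Fin n)} {i : Fin n} (h : i ∈ C) : chi C i = 1 := by
  simp [chi, h]
lemma chi_not_mem {C : Finset (Fin n)} {i : Fin n} (h : i ∉ C) : chi C i = 0 := by
  simp [chi, h]
lemma chi_cases (C : Finset (Fin n)) (i : Fin n) : chi C i = 0 ∨ chi C i = 1 := by
  by_cases h : i ∈ C <;> simp [chi, h]

lemma Csub_inter {S : Set (Fin n → ℤ)} (hS : IsLNatSet S) {x : Fin n → ℤ}
    {C C' : Finset (Fin n)} (h1 : Csub S x C) (h2 : Csub S x C') :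
    Csub S x (C ∩ C') := by
  have hm := cmid_mem hS h1 h2
  have he : cmid (fun i => x i - chi C i) (fun i => x i - chi C' i)
      = fun i => x i - chi (C ∩ C') i := by
    funext i
    simp only [cmid_apply]
    by_cases hc : i ∈ C <;> by_cases hc' : i ∈ C'
    · rw [chi_mem hc, chi_mem hc', chi_mem (Finset.mem_inter.mpr ⟨hc, hc'⟩),
        show x i - 1 - (x i - 1) = (0:ℤ) by ring, c2_zero]; ring
    · rw [chi_mem hc, chi_not_mem hc',
        chi_not_mem (by simp [Finset.mem_inter, hc']),
        show x i - 0 - (x i - 1) = (1:ℤ) by ring, c2_one]; ring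
    · rw [chi_not_mem hc, chi_mem hc',
        chi_not_mem (by simp [Finset.mem_inter, hc]),
        show x i - 1 - (x i - 0) = (-1:ℤ) by ring, c2_neg_one]; ring
    · rw [chi_not_mem hc, chi_not_mem hc',
        chi_not_mem (by simp [Finset.mem_inter, hc]),
        show x i - 0 - (x i - 0) = (0:ℤ) by ring, c2_zero]; ring
  rwa [he] at hm

lemma Csub_union {S : Set (Fin n → ℤ)} (hS : IsLNatSet S) {x : Fin n → ℤ}
    {C C' : Finset (Fin n)} (h1 : Csub S x C) (h2 : Csub S x C') :
    Csub S x (C ∪ C') := by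
  have hm := fmid_mem hS h1 h2
  have he : fmid (fun i => x i - chi C i) (fun i => x i - chi C' i)
      = fun i => x i - chi (C ∪ C') i := by
    funext i
    simp only [fmid_apply]
    by_cases hc : i ∈ C <;> by_cases hc' : i ∈ C'
    · rw [chi_mem hc, chi_mem hc', chi_mem (Finset.mem_union.mpr (Or.inl hc)),
        show x i - 1 - (x i - 1) = (0:ℤ) by ring, f2_zero]; ring
    · rw [chi_mem hc, chi_not_mem hc', chi_mem (Finset.mem_union.mpr (Or.inl hc)),
        show x i - 0 - (x i - 1) = (1:ℤ) by ring, f2_one]; ring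
    · rw [chi_not_mem hc, chi_mem hc', chi_mem (Finset.mem_union.mpr (Or.inr hc')),
        show x i - 1 - (x i - 0) = (-1:ℤ) by ring, f2_neg_one]; ring
    · rw [chi_not_mem hc, chi_not_mem hc',
        chi_not_mem (by simp [Finset.mem_union, hc, hc']),
        show x i - 0 - (x i - 0) = (0:ℤ) by ring, f2_zero]; ring
  rwa [he] at hm

lemma Csub_diff {S : Set (Fin n → ℤ)} (hS : IsLNatSet S) {x : Fin n → ℤ}
    {C B : Finset (Fin n)} (h1 : Csub S x C) (h2 : Dadd S x B) :
    Csub S x (C \ B) := by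
  have hm := fmid_mem hS h1 h2
  have he : fmid (fun i => x i - chi C i) (fun i => x i + chi B i)
      = fun i => x i - chi (C \ B) i := by
    funext i
    simp only [fmid_apply]
    by_cases hc : i ∈ C <;> by_cases hb : i ∈ B
    · rw [chi_mem hc, chi_mem hb, chi_not_mem (by simp [Finset.mem_sdiff, hb]),
        show x i + 1 - (x i - 1) = (2:ℤ) by ring, f2_two]; ring
    · rw [chi_mem hc, chi_not_mem hb, chi_mem (Finset.mem_sdiff.mpr ⟨hc, hb⟩),
        show x i + 0 - (x i - 1) = (1:ℤ) by ring, f2_one]; ring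
    · rw [chi_not_mem hc, chi_mem hb, chi_not_mem (by simp [Finset.mem_sdiff, hc]),
        show x i + 1 - (x i - 0) = (1:ℤ) by ring, f2_one]; ring
    · rw [chi_not_mem hc, chi_not_mem hb, chi_not_mem (by simp [Finset.mem_sdiff, hc]),
        show x i + 0 - (x i - 0) = (0:ℤ) by ring, f2_zero]; ring
  rwa [he] at hm

end LNatAux
namespace LNatAux

variable {n : ℕ}

lemma c2_natAbs_le (d : ℤ) : (c2 d).natAbs ≤ d.natAbs := by
  rcases le_or_gt d 0 with h | h
  · have h1 := c2_nonpos h; have h2 := le_c2 h; omega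
  · have h1 := one_le_c2 (by omega : (1:ℤ) ≤ d)
    have h2 := c2_le_self (le_of_lt h); omega

lemma c2_natAbs_lt {d : ℤ} (h : 2 ≤ d.natAbs) : (c2 d).natAbs < d.natAbs := by
  rcases le_or_gt d 0 with h' | h'
  · have hd : d ≤ -1 := by omega
    have h1 := lt_c2 hd; have h2 := c2_nonpos h'; omega
  · have hd : 2 ≤ d := by omega
    have h1 := c2_lt_self hd; have h2 := one_le_c2 (by omega : (1:ℤ) ≤ d); omega

lemma f2_natAbs_le (d : ℤ) : (f2 d).natAbs ≤ d.natAbs := by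
  rw [f2_eq_neg_c2_neg]
  have := c2_natAbs_le (-d)
  simpa using this

lemma f2_natAbs_lt {d : ℤ} (h : 2 ≤ d.natAbs) : (f2 d).natAbs < d.natAbs := by
  rw [f2_eq_neg_c2_neg]
  have := c2_natAbs_lt (d := -d) (by simpa using h)
  simpa using this

def mu2 (x y : Fin n → ℤ) : ℕ := ∑ k, ((y k - x k).natAbs - 1)

lemma crux_aux {S : Set (Fin n → ℤ)} (hS : IsLNatSet S) {x : Fin n → ℤ} (hx : x ∈ S)
    (i j : Fin n) :
    ∀ N : ℕ, ∀ y ∈ S, x j - x i + 1 ≤ y j - y i → mu2 x y ≤ N →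
    ∃ t ∈ S, (∀ k, (t k - x k).natAbs ≤ 1) ∧ x j - x i + 1 ≤ t j - t i := by
  intro N
  induction N with
  | zero =>
    intro y hy hgap hmu
    refine ⟨y, hy, fun k => ?_, hgap⟩
    have := Finset.sum_le_sum_of_subset (Finset.subset_univ {k})
      (f := fun k => ((y k - x k).natAbs - 1))
    simp only [Finset.sum_singleton] at this
    rw [mu2] at hmu
    omega
  | succ N ih =>
    intro y hy hgap hmu
    by_cases hsmall : ∀ k, (y k - x k).natAbs ≤ 1
    · exact ⟨y, hy, hsmall, hgap⟩
    · push_neg at hsmall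
      obtain ⟨k0, hk0⟩ := hsmall
      rcases Int.even_or_odd (y i - x i) with hpar | hpar
      · -- even: use cmid
        obtain ⟨m, hm⟩ := hpar
        have hdi : y i - x i = 2*m := by omega
        set y' := cmid x y with hy'
        have hy'S : y' ∈ S := cmid_mem hS hx hy
        have hco : ∀ k, y' k - x k = c2 (y k - x k) := by
          intro k; rw [hy', cmid_apply]; ring
        have hgap' : x j - x i + 1 ≤ y' j - y' i := by
          have h1 : y' i - x i = m := by rw [hco i, hdi, c2_two_mul]
          have h3 : 2*m + 1 ≤ y j - x j := by omega
          have h4 : m + 1 ≤ c2 (y j - x j) := by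
            calc m + 1 = c2 (2*m+1) := (c2_two_mul_add_one m).symm
            _ ≤ c2 (y j - x j) := c2_mono h3
          have h6 : m + 1 ≤ y' j - x j := by rw [hco j]; exact h4
          omega
        have hmono : ∀ k, ((y' k - x k).natAbs - 1) ≤ ((y k - x k).natAbs - 1) := by
          intro k; have := c2_natAbs_le (y k - x k); rw [hco k]; omega
        have hstrict : ((y' k0 - x k0).natAbs - 1) < ((y k0 - x k0).natAbs - 1) := by
          have := c2_natAbs_lt (d := y k0 - x k0) (by omega)
          rw [hco k0]; omega
        have hlt : mu2 x y' < mu2 x y :=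
          Finset.sum_lt_sum (fun k _ => hmono k) ⟨k0, Finset.mem_univ k0, hstrict⟩
        exact ih y' hy'S hgap' (Nat.lt_succ_iff.mp (lt_of_lt_of_le hlt hmu))
      · -- odd: use fmid
        obtain ⟨m, hm⟩ := hpar
        have hdi : y i - x i = 2*m + 1 := by omega
        set y' := fmid x y with hy'
        have hy'S : y' ∈ S := fmid_mem hS hx hy
        have hco : ∀ k, y' k - x k = f2 (y k - x k) := by
          intro k; rw [hy', fmid_apply]; ring
        have hgap' : x j - x i + 1 ≤ y' j - y' i := by
          have h1 : y' i - x i = m := by rw [hco i, hdi, f2_two_mul_add_one]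
          have h3 : 2*m + 2 ≤ y j - x j := by omega
          have h4 : m + 1 ≤ f2 (y j - x j) := by
            calc m + 1 = f2 (2*(m+1)) := (f2_two_mul (m+1)).symm
            _ ≤ f2 (y j - x j) := f2_mono (by omega)
          have h6 : m + 1 ≤ y' j - x j := by rw [hco j]; exact h4
          omega
        have hmono : ∀ k, ((y' k - x k).natAbs - 1) ≤ ((y k - x k).natAbs - 1) := by
          intro k; have := f2_natAbs_le (y k - x k); rw [hco k]; omega
        have hstrict : ((y' k0 - x k0).natAbs - 1) < ((y k0 - x k0).natAbs - 1) := by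
          have := f2_natAbs_lt (d := y k0 - x k0) (by omega)
          rw [hco k0]; omega
        have hlt : mu2 x y' < mu2 x y :=
          Finset.sum_lt_sum (fun k _ => hmono k) ⟨k0, Finset.mem_univ k0, hstrict⟩
        exact ih y' hy'S hgap' (Nat.lt_succ_iff.mp (lt_of_lt_of_le hlt hmu))

/-- crux separation lemma -/
lemma crux {S : Set (Fin n → ℤ)} (hS : IsLNatSet S) {x z : Fin n → ℤ} (hx : x ∈ S)
    (hz : HzP S z) {i j : Fin n} (h1 : 1 ≤ x i - z i) (h2 : x j - z j < x i - z i) :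
    ∃ C : Finset (Fin n), Csub S x C ∧ i ∈ C ∧ j ∉ C := by
  obtain ⟨y0, hy0, hgap0⟩ := hz.2.2 i j
  have hgap : x j - x i + 1 ≤ y0 j - y0 i := by omega
  obtain ⟨t, htS, htsmall, htgap⟩ := crux_aux hS hx i j (mu2 x y0) y0 hy0 hgap le_rfl
  rcases lt_or_ge (t i) (x i) with hti | hti
  · refine ⟨Finset.univ.filter (fun k => t k < x k), lemmaC' hS hx htS, ?_, ?_⟩
    · simp [Finset.mem_filter, hti]
    · simp only [Finset.mem_filter, Finset.mem_univ, true_and, not_lt]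
      have hi := htsmall i
      omega
  · -- t i = x i, t j = x j + 1
    have hi := htsmall i
    have hj := htsmall j
    have hti0 : t i = x i ∧ t j = x j + 1 := by omega
    have hB : Dadd S x (Finset.univ.filter (fun k => x k < t k)) := lemmaC hS hx htS
    obtain ⟨y1, hy1, hy1i⟩ := hz.1 i
    have hD : Csub S x (Finset.univ.filter (fun k => y1 k < x k)) := lemmaC' hS hx hy1
    refine ⟨_, Csub_diff hS hD hB, ?_, ?_⟩
    · simp only [Finset.mem_sdiff, Finset.mem_filter, Finset.mem_univ, true_and]
      omega
    · simp only [Finset.mem_sdiff, Finset.mem_filter, Finset.mem_univ, true_and]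
      intro h
      exact absurd (by omega : x j < t j) h.2

end LNatAux
namespace LNatAux

variable {n : ℕ}

lemma Csub_empty {S : Set (Fin n → ℤ)} {x : Fin n → ℤ} (hx : x ∈ S) :
    Csub S x (∅ : Finset (Fin n)) := by
  show (fun i => x i - chi ∅ i) ∈ S
  have : (fun i => x i - chi (∅ : Finset (Fin n)) i) = x := by
    funext i; rw [chi_not_mem (Finset.notMem_empty i)]; ring
  rwa [this]

/-- Main step lemma: can subtract the indicator of the argmax set. -/
lemma B1 {S : Set (Fin n → ℤ)} (hS : IsLNatSet S) {x z : Fin n → ℤ} (hx : x ∈ S)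
    (hz : HzP S z) {M : ℤ} (hM : 1 ≤ M) (hmax : ∀ i, x i - z i ≤ M) :
    Csub S x (Finset.univ.filter (fun i => x i - z i = M)) := by
  classical
  set A := Finset.univ.filter (fun i => x i - z i = M) with hA
  have hmemA : ∀ i, i ∈ A ↔ x i - z i = M := by
    intro i; simp [hA]
  -- base certificates
  have hD : ∀ i ∈ A, ∃ D, Csub S x D ∧ i ∈ D := by
    intro i hi
    obtain ⟨y1, hy1, hy1i⟩ := hz.1 i
    refine ⟨Finset.univ.filter (fun k => y1 k < x k), lemmaC' hS hx hy1, ?_⟩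
    have : x i - z i = M := (hmemA i).mp hi
    simp only [Finset.mem_filter, Finset.mem_univ, true_and]
    omega
  -- separating certificates, intersected over a finset of excluded indices
  have hsep : ∀ i ∈ A, ∀ J : Finset (Fin n), (∀ j ∈ J, j ∉ A) →
      ∃ C, Csub S x C ∧ i ∈ C ∧ ∀ j ∈ J, j ∉ C := by
    intro i hi J
    induction J using Finset.induction_on with
    | empty =>
      intro _
      obtain ⟨D, hD1, hD2⟩ := hD i hi
      exact ⟨D, hD1, hD2, fun j hj => absurd hj (Finset.notMem_empty j)⟩
    | @insert j J hjJ ih =>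
      intro hJ
      obtain ⟨C, hC1, hC2, hC3⟩ := ih (fun k hk => hJ k (Finset.mem_insert_of_mem hk))
      have hjA : j ∉ A := hJ j (Finset.mem_insert_self j J)
      have h1 : 1 ≤ x i - z i := by have := (hmemA i).mp hi; omega
      have h2 : x j - z j < x i - z i := by
        have hle := hmax j
        have hne : x j - z j ≠ M := fun hc => hjA ((hmemA j).mpr hc)
        have := (hmemA i).mp hi
        omega
      obtain ⟨C', hC'1, hC'2, hC'3⟩ := crux hS hx hz h1 h2
      refine ⟨C ∩ C', Csub_inter hS hC1 hC'1, Finset.mem_inter.mpr ⟨hC2, hC'2⟩, ?_⟩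
      intro k hk
      rcases Finset.mem_insert.mp hk with rfl | hk'
      · intro hmem; exact hC'3 (Finset.mem_inter.mp hmem).2
      · intro hmem; exact hC3 k hk' (Finset.mem_inter.mp hmem).1
  -- tight certificates: i ∈ C_i ⊆ A
  have htight : ∀ i ∈ A, ∃ C, Csub S x C ∧ i ∈ C ∧ C ⊆ A := by
    intro i hi
    obtain ⟨C, h1, h2, h3⟩ := hsep i hi Aᶜ (fun j hj => Finset.mem_compl.mp hj)
    refine ⟨C, h1, h2, fun k hk => ?_⟩
    by_contra hkA
    exact h3 k (Finset.mem_compl.mpr hkA) hk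
  rcases Finset.eq_empty_or_nonempty A with hAe | ⟨i0, hi0⟩
  · rw [hAe] at *
    exact Csub_empty hx
  · -- union over A
    have hunion : ∀ J : Finset (Fin n), J ⊆ A → ∃ C, Csub S x C ∧ J ⊆ C ∧ C ⊆ A := by
      intro J
      induction J using Finset.induction_on with
      | empty =>
        intro _
        obtain ⟨C, h1, h2, h3⟩ := htight i0 hi0
        exact ⟨C, h1, Finset.empty_subset C, h3⟩
      | @insert j J hjJ ih =>
        intro hJA
        have hjA : j ∈ A := hJA (Finset.mem_insert_self j J)
        obtain ⟨C, h1, h2, h3⟩ := ih (fun k hk => hJA (Finset.mem_insert_of_mem hk))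
        obtain ⟨C', h1', h2', h3'⟩ := htight j hjA
        refine ⟨C ∪ C', Csub_union hS h1 h1', ?_, Finset.union_subset h3 h3'⟩
        intro k hk
        rcases Finset.mem_insert.mp hk with rfl | hk'
        · exact Finset.mem_union_right C h2'
        · exact Finset.mem_union_left C' (h2 hk')
    obtain ⟨C, h1, h2, h3⟩ := hunion A le_rfl
    rwa [Finset.Subset.antisymm h3 h2] at h1

end LNatAux
namespace LNatAux

variable {n : ℕ}

lemma B1' {S : Set (Fin n → ℤ)} (hS : IsLNatSet S) {x z : Fin n → ℤ} (hx : x ∈ S)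
    (hz : HzP S z) {M : ℤ} (hM : 1 ≤ M) (hmax : ∀ i, z i - x i ≤ M) :
    Dadd S x (Finset.univ.filter (fun i => z i - x i = M)) := by
  have hB := B1 (Sneg_lnat hS) (x := -x) (z := -z) (by simpa [Sneg] using hx)
    (Sneg_hzP hz) hM (fun i => by have := hmax i; simp only [Pi.neg_apply]; omega)
  have hfe : (Finset.univ.filter (fun i => (-x) i - (-z) i = M))
      = (Finset.univ.filter (fun i => z i - x i = M)) := by
    apply Finset.filter_congr; intro i _
    simp only [Pi.neg_apply, eq_iff_iff]
    omega
  rw [Csub, hfe, mem_Sneg] at hB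
  have : -(fun i => (-x) i - chi (Finset.univ.filter (fun i => z i - x i = M)) i)
      = fun i => x i + chi (Finset.univ.filter (fun i => z i - x i = M)) i := by
    funext i; simp only [Pi.neg_apply]; ring
  rwa [this] at hB

/-- The representation theorem: every point satisfying the marginal conditions is in S. -/
lemma repr_mem {S : Set (Fin n → ℤ)} (hS : IsLNatSet S) {z : Fin n → ℤ}
    (hz : HzP S z) : z ∈ S := by
  classical
  obtain ⟨x0, hx0⟩ := hS.1
  have hex : ∃ m, ∃ x ∈ S, (∑ i, (x i - z i).natAbs) = m := ⟨_, x0, hx0, rfl⟩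
  obtain ⟨x, hxS, hxm⟩ := Nat.find_spec hex
  by_cases hzx : (∀ i, x i = z i)
  · have : z = x := funext fun i => (hzx i).symm
    rwa [this]
  · push_neg at hzx
    obtain ⟨i0, hi0⟩ := hzx
    have hne : (Finset.univ : Finset (Fin n)).Nonempty := ⟨i0, Finset.mem_univ i0⟩
    exfalso
    rcases le_or_gt 1 (Finset.univ.sup' hne (fun i => x i - z i)) with hM1 | hM1
    · set M := Finset.univ.sup' hne (fun i => x i - z i) with hMdef
      obtain ⟨iM, _, hiM⟩ := Finset.exists_mem_eq_sup' hne (fun i => x i - z i)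
      have hmax : ∀ i, x i - z i ≤ M := by
        intro i; rw [hMdef]; exact Finset.le_sup' (fun i => x i - z i) (Finset.mem_univ i)
      have hstep := B1 hS hxS hz hM1 hmax
      set A := Finset.univ.filter (fun i => x i - z i = M) with hAdef
      have hiMA : iM ∈ A := by
        simp only [hAdef, Finset.mem_filter, Finset.mem_univ, true_and]
        omega
      have hsum : (∑ i, ((x i - chi A i) - z i).natAbs) < ∑ i, (x i - z i).natAbs := by
        apply Finset.sum_lt_sum
        · intro k _
          rcases chi_cases A k with hc | hc
          · rw [hc]; omega
          · have hk : k ∈ A := by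
              rcases chi_cases A k with h' | h'
              · omega
              · by_contra hkA; rw [chi_not_mem hkA] at hc; omega
            have : x k - z k = M := by
              have := Finset.mem_filter.mp (hAdef ▸ hk); exact this.2
            rw [hc]; omega
        · refine ⟨iM, Finset.mem_univ iM, ?_⟩
          rw [chi_mem hiMA]
          have : x iM - z iM = M := by omega
          omega
      have hle : Nat.find hex ≤ ∑ i, ((x i - chi A i) - z i).natAbs :=
        Nat.find_le ⟨_, hstep, rfl⟩
      omega
    · -- all differences ≤ 0; mirror
      have hall : ∀ i, x i - z i ≤ 0 := by
        intro i
        have := Finset.le_sup' (fun i => x i - z i) (Finset.mem_univ i)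
        omega
      set M := Finset.univ.sup' hne (fun i => z i - x i) with hMdef
      have hM1' : 1 ≤ M := by
        have h1 : z i0 - x i0 ≤ M := by
          rw [hMdef]; exact Finset.le_sup' (fun i => z i - x i) (Finset.mem_univ i0)
        have := hall i0
        omega
      obtain ⟨iM, _, hiM⟩ := Finset.exists_mem_eq_sup' hne (fun i => z i - x i)
      have hmax : ∀ i, z i - x i ≤ M := by
        intro i; rw [hMdef]; exact Finset.le_sup' (fun i => z i - x i) (Finset.mem_univ i)
      have hstep := B1' hS hxS hz hM1' hmax
      set A := Finset.univ.filter (fun i => z i - x i = M) with hAdef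
      have hiMA : iM ∈ A := by
        simp only [hAdef, Finset.mem_filter, Finset.mem_univ, true_and]
        omega
      have hsum : (∑ i, ((x i + chi A i) - z i).natAbs) < ∑ i, (x i - z i).natAbs := by
        apply Finset.sum_lt_sum
        · intro k _
          rcases chi_cases A k with hc | hc
          · rw [hc]; omega
          · have hk : k ∈ A := by
              by_contra hkA; rw [chi_not_mem hkA] at hc; omega
            have : z k - x k = M := by
              have := Finset.mem_filter.mp (hAdef ▸ hk); exact this.2
            rw [hc]; omega
        · refine ⟨iM, Finset.mem_univ iM, ?_⟩
          rw [chi_mem hiMA]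
          have : z iM - x iM = M := by omega
          omega
      have hle : Nat.find hex ≤ ∑ i, ((x i + chi A i) - z i).natAbs :=
        Nat.find_le ⟨_, hstep, rfl⟩
      omega

end LNatAux
namespace LNatAux

variable {n : ℕ}

/-- Reduction lemma: if `z ∈ S` exceeds the box upper bound somewhere, we can subtract
the indicator of a suitable set `A` and stay in `S`, with `A` "recession-compatible". -/
lemma reduceUp {S : Set (Fin n → ℤ)} (hS : IsLNatSet S)
    {x0 : Fin n → ℤ} (hx0 : x0 ∈ S)
    (U : Fin n → Prop) (ub : Fin n → ℤ) (W M : ℤ)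
    (hW1 : 1 ≤ W)
    (hx0W : ∀ i j, 1 - W ≤ x0 j - x0 i)
    (hKW : ∀ i j, (∃ c, ∀ y ∈ S, y j - y i ≤ c) → ∀ y ∈ S, y j - y i ≤ W - 1)
    (hubU : ∀ i, U i → ∀ y ∈ S, y i ≤ ub i)
    (hubM : ∀ i, ¬ U i → ub i = M)
    (hMx : ∀ i, x0 i + 2 ≤ M - (n+1) * W)
    (hMu : ∀ i, U i → ub i + 2 ≤ M - (n+1) * W)
    (bl : Fin n → ℤ) (hMl : ∀ i, bl i + 2 ≤ M - (n+1) * W)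
    {z : Fin n → ℤ} (hzS : z ∈ S) {h0 : Fin n} (hviol : ub h0 < z h0) :
    ∃ A : Finset (Fin n), h0 ∈ A ∧
      (fun i => z i - chi A i) ∈ S ∧
      (∀ i ∈ A, ¬ U i) ∧
      (∀ i ∈ A, bl i + 1 ≤ z i) ∧
      (∀ i j, (∃ c, ∀ y ∈ S, y j - y i ≤ c) → j ∈ A → i ∈ A) := by
  classical
  -- find an empty band
  have hband : ∃ k : ℕ, k ≤ n ∧ ∀ i, ¬ (M - k*W - W < z i ∧ z i ≤ M - k*W) := by
    by_contra hcon
    push_neg at hcon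
    have hc' : ∀ k : ℕ, k ≤ n → ∃ i, M - k*W - W < z i ∧ z i ≤ M - k*W := by
      intro k hk
      obtain ⟨i, hi⟩ := hcon k hk
      exact ⟨i, hi⟩
    let f : Fin (n+1) → Fin n := fun k => (hc' k.val (by omega)).choose
    have hfspec : ∀ k : Fin (n+1),
        M - k.val*W - W < z (f k) ∧ z (f k) ≤ M - k.val*W := fun k =>
      (hc' k.val (by omega)).choose_spec
    have hinj : Function.Injective f := by
      intro a b hab
      by_contra hne
      wlog hlt : a.val < b.val generalizing a b
      · exact this hab.symm (fun h => hne h.symm) (by omega)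
      · have ha := hfspec a
        have hb := hfspec b
        rw [hab] at ha
        have hmul : (a.val : ℤ) * W + W ≤ (b.val : ℤ) * W := by
          have h1 : ((a.val : ℤ) + 1) * W ≤ (b.val : ℤ) * W := by
            apply mul_le_mul_of_nonneg_right _ (by omega)
            exact_mod_cast hlt
          linarith
        omega
    have := Fintype.card_le_of_injective f hinj
    simp only [Fintype.card_fin] at this
    omega
  obtain ⟨k, hkn, hband⟩ := hband
  set A := Finset.univ.filter (fun i => M - k*W - W < z i) with hAdef
  have hmemA : ∀ i, i ∈ A ↔ M - k*W - W < z i := by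
    intro i; simp [hAdef]
  have hApos : ∀ i ∈ A, M - k*W < z i := by
    intro i hi
    have h1 := (hmemA i).mp hi
    have h2 := hband i
    omega
  -- numeric bounds
  have hkW : (k:ℤ) * W ≤ (n:ℤ) * W := by
    apply mul_le_mul_of_nonneg_right _ (by omega)
    exact_mod_cast hkn
  have hbig : ∀ i ∈ A, M - (n+1)*W + W < z i := by
    intro i hi
    have := hApos i hi
    have : M - (n+1)*W + W = M - (n:ℤ)*W := by ring
    omega
  have hnotU : ∀ i ∈ A, ¬ U i := by
    intro i hi hUi
    have h1 := hMu i hUi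
    have h2 := hubU i hUi z hzS
    have h3 := hbig i hi
    omega
  have hx0lt : ∀ i ∈ A, x0 i + 1 < z i := by
    intro i hi
    have h1 := hMx i
    have h2 := hbig i hi
    omega
  have hblA : ∀ i ∈ A, bl i + 1 ≤ z i := by
    intro i hi
    have h1 := hMl i
    have h2 := hbig i hi
    omega
  have hback : ∀ i j, (∃ c, ∀ y ∈ S, y j - y i ≤ c) → j ∈ A → i ∈ A := by
    intro i j hc hj
    have h1 := hKW i j hc z hzS
    have h2 := hApos j hj
    rw [hmemA]
    omega
  have hh0 : h0 ∈ A := by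
    have hU : ¬ U h0 := by
      intro hU
      exact absurd (hubU h0 hU z hzS) (by omega)
    have hub0 : ub h0 = M := hubM h0 hU
    have hk0 : (0:ℤ) ≤ (k:ℤ)*W := by positivity
    rw [hmemA]
    omega
  -- membership via the representation theorem
  have hmem : (fun i => z i - chi A i) ∈ S := by
    apply repr_mem hS
    refine ⟨fun i => ?_, fun i => ?_, fun i j => ?_⟩
    · by_cases hi : i ∈ A
      · refine ⟨x0, hx0, ?_⟩
        show x0 i ≤ z i - chi A i
        rw [chi_mem hi]
        have := hx0lt i hi
        omega
      · refine ⟨z, hzS, ?_⟩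
        show z i ≤ z i - chi A i
        rw [chi_not_mem hi]; omega
    · refine ⟨z, hzS, ?_⟩
      show z i - chi A i ≤ z i
      rcases chi_cases A i with hc | hc <;> rw [hc] <;> omega
    · by_cases hij : i ∈ A ∧ j ∉ A
      · obtain ⟨hi, hj⟩ := hij
        by_cases hEb : ∃ c, ∀ y ∈ S, y j - y i ≤ c
        · refine ⟨x0, hx0, ?_⟩
          show (z j - chi A j) - (z i - chi A i) ≤ x0 j - x0 i
          rw [chi_mem hi, chi_not_mem hj]
          have h1 : ¬ (M - k*W - W < z j) := by
            intro hlt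
            exact hj ((hmemA j).mpr hlt)
          have h2 := hApos i hi
          have h3 := hx0W i j
          omega
        · push_neg at hEb
          obtain ⟨y, hy, hgt⟩ := hEb ((z j - chi A j) - (z i - chi A i))
          exact ⟨y, hy, le_of_lt hgt⟩
      · push_neg at hij
        by_cases hi : i ∈ A
        · have hj := hij hi
          refine ⟨z, hzS, ?_⟩
          show (z j - chi A j) - (z i - chi A i) ≤ z j - z i
          rw [chi_mem hi, chi_mem hj]
          omega
        · refine ⟨z, hzS, ?_⟩
          show (z j - chi A j) - (z i - chi A i) ≤ z j - z i
          rw [chi_not_mem hi]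
          rcases chi_cases A j with hc | hc <;> rw [hc] <;> omega
  exact ⟨A, hh0, hmem, hnotU, hblA, hback⟩

end LNatAux
namespace LNatAux

variable {n : ℕ}

def IupP (S : Set (Fin n → ℤ)) (i : Fin n) : Prop := ∃ b, ∀ y ∈ S, y i ≤ b
def IlowP (S : Set (Fin n → ℤ)) (i : Fin n) : Prop := ∃ b, ∀ y ∈ S, b ≤ y i
def EbddP (S : Set (Fin n → ℤ)) (i j : Fin n) : Prop := ∃ c, ∀ y ∈ S, y j - y i ≤ c

def Gset (S : Set (Fin n → ℤ)) : Set (Fin n → ℤ) :=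
  {d | (∀ i, IlowP S i → 0 ≤ d i) ∧ (∀ i, IupP S i → d i ≤ 0) ∧
       (∀ i j, EbddP S i j → d j ≤ d i)}

lemma zero_mem_Gset (S : Set (Fin n → ℤ)) : (0 : Fin n → ℤ) ∈ Gset S :=
  ⟨fun _ _ => le_refl _, fun _ _ => le_refl _, fun _ _ _ => le_refl _⟩

lemma Gset_add {S : Set (Fin n → ℤ)} {d d' : Fin n → ℤ} (hd : d ∈ Gset S)
    (hd' : d' ∈ Gset S) : d + d' ∈ Gset S := by
  refine ⟨fun i hi => ?_, fun i hi => ?_, fun i j hij => ?_⟩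
  · have := hd.1 i hi; have := hd'.1 i hi; simp only [Pi.add_apply]; omega
  · have := hd.2.1 i hi; have := hd'.2.1 i hi; simp only [Pi.add_apply]; omega
  · have := hd.2.2 i j hij; have := hd'.2.2 i j hij; simp only [Pi.add_apply]; omega

lemma Gset_nsmul {S : Set (Fin n → ℤ)} {d : Fin n → ℤ} (hd : d ∈ Gset S) (m : ℕ) :
    (fun i => (m : ℤ) * d i) ∈ Gset S := by
  refine ⟨fun i hi => ?_, fun i hi => ?_, fun i j hij => ?_⟩
  · have := hd.1 i hi; positivity
  · have := hd.2.1 i hi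
    exact mul_nonpos_of_nonneg_of_nonpos (by positivity) this
  · have := hd.2.2 i j hij
    exact mul_le_mul_of_nonneg_left this (by positivity)

lemma Gset_lnat {S : Set (Fin n → ℤ)} : IsLNatSet (Gset S) := by
  refine ⟨⟨0, zero_mem_Gset S⟩, fun d hd d' hd' => ⟨?_, ?_⟩⟩
  · refine ⟨fun i hi => ?_, fun i hi => ?_, fun i j hij => ?_⟩
    · have h1 := hd.1 i hi; have h2 := hd'.1 i hi
      apply Int.ceil_nonneg
      have : (0:ℚ) ≤ (d i : ℚ) + (d' i : ℚ) := by
        have : (0:ℚ) ≤ (d i : ℚ) := by exact_mod_cast h1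
        have : (0:ℚ) ≤ (d' i : ℚ) := by exact_mod_cast h2
        linarith
      linarith
    · have h1 := hd.2.1 i hi; have h2 := hd'.2.1 i hi
      have : ((d i : ℚ) + (d' i : ℚ)) / 2 ≤ ((0:ℤ) : ℚ) := by
        have : (d i : ℚ) ≤ 0 := by exact_mod_cast h1
        have : (d' i : ℚ) ≤ 0 := by exact_mod_cast h2
        push_cast
        linarith
      calc ⌈((d i : ℚ) + (d' i : ℚ)) / 2⌉ ≤ (0:ℤ) := Int.ceil_le.mpr this
      _ = 0 := rfl
    · have h1 := hd.2.2 i j hij; have h2 := hd'.2.2 i j hij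
      apply Int.ceil_le_ceil
      have e1 : (d j : ℚ) ≤ d i := by exact_mod_cast h1
      have e2 : (d' j : ℚ) ≤ d' i := by exact_mod_cast h2
      linarith
  · refine ⟨fun i hi => ?_, fun i hi => ?_, fun i j hij => ?_⟩
    · have h1 := hd.1 i hi; have h2 := hd'.1 i hi
      apply Int.le_floor.mpr
      have e1 : (0:ℚ) ≤ (d i : ℚ) := by exact_mod_cast h1
      have e2 : (0:ℚ) ≤ (d' i : ℚ) := by exact_mod_cast h2
      push_cast
      linarith
    · have h1 := hd.2.1 i hi; have h2 := hd'.2.1 i hi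
      have e1 : (d i : ℚ) ≤ 0 := by exact_mod_cast h1
      have e2 : (d' i : ℚ) ≤ 0 := by exact_mod_cast h2
      have : (((d i : ℚ) + (d' i : ℚ)) / 2) ≤ 0 := by linarith
      have hfl : ⌊((d i : ℚ) + (d' i : ℚ)) / 2⌋ ≤ ⌊(0:ℚ)⌋ := Int.floor_le_floor this
      simpa using hfl
    · have h1 := hd.2.2 i j hij; have h2 := hd'.2.2 i j hij
      apply Int.floor_le_floor
      have e1 : (d j : ℚ) ≤ d i := by exact_mod_cast h1
      have e2 : (d' j : ℚ) ≤ d' i := by exact_mod_cast h2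
      linarith

/-- adding a recession vector stays in S -/
lemma add_Gset_mem {S : Set (Fin n → ℤ)} (hS : IsLNatSet S) {t d : Fin n → ℤ}
    (ht : t ∈ S) (hd : d ∈ Gset S) : t + d ∈ S := by
  apply repr_mem hS
  refine ⟨fun i => ?_, fun i => ?_, fun i j => ?_⟩
  · rcases le_or_gt 0 (d i) with h | h
    · exact ⟨t, ht, by simp only [Pi.add_apply]; omega⟩
    · have hni : ¬ IlowP S i := fun hc => absurd (hd.1 i hc) (by omega)
      rw [IlowP] at hni
      push_neg at hni
      obtain ⟨y, hy, hlt⟩ := hni (t i + d i)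
      exact ⟨y, hy, by simp only [Pi.add_apply]; omega⟩
  · rcases le_or_gt (d i) 0 with h | h
    · exact ⟨t, ht, by simp only [Pi.add_apply]; omega⟩
    · have hni : ¬ IupP S i := fun hc => absurd (hd.2.1 i hc) (by omega)
      rw [IupP] at hni
      push_neg at hni
      obtain ⟨y, hy, hlt⟩ := hni (t i + d i)
      exact ⟨y, hy, by simp only [Pi.add_apply]; omega⟩
  · rcases le_or_gt (d j) (d i) with h | h
    · exact ⟨t, ht, by simp only [Pi.add_apply]; omega⟩
    · have hni : ¬ EbddP S i j := fun hc => absurd (hd.2.2 i j hc) (by omega)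
      rw [EbddP] at hni
      push_neg at hni
      obtain ⟨y, hy, hlt⟩ := hni ((t j + d j) - (t i + d i))
      exact ⟨y, hy, by simp only [Pi.add_apply]; omega⟩

end LNatAux
namespace LNatAux

variable {n : ℕ}

lemma reduceDown {S : Set (Fin n → ℤ)} (hS : IsLNatSet S)
    {x0 : Fin n → ℤ} (hx0 : x0 ∈ S)
    (L : Fin n → Prop) (lb : Fin n → ℤ) (W M : ℤ)
    (hW1 : 1 ≤ W)
    (hx0W : ∀ i j, 1 - W ≤ x0 j - x0 i)
    (hKW : ∀ i j, EbddP S i j → ∀ y ∈ S, y j - y i ≤ W - 1)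
    (hlbL : ∀ i, L i → ∀ y ∈ S, lb i ≤ y i)
    (hlbM : ∀ i, ¬ L i → lb i = -M)
    (hMx : ∀ i, -x0 i + 2 ≤ M - (n+1) * W)
    (hMu : ∀ i, L i → -lb i + 2 ≤ M - (n+1) * W)
    (bu : Fin n → ℤ) (hMl : ∀ i, -bu i + 2 ≤ M - (n+1) * W)
    {z : Fin n → ℤ} (hzS : z ∈ S) {h0 : Fin n} (hviol : z h0 < lb h0) :
    ∃ A : Finset (Fin n), h0 ∈ A ∧
      (fun i => z i + chi A i) ∈ S ∧
      (∀ i ∈ A, ¬ L i) ∧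
      (∀ i ∈ A, z i + 1 ≤ bu i) ∧
      (∀ i j, EbddP S i j → i ∈ A → j ∈ A) := by
  have hx0' : -x0 ∈ Sneg S := by simpa [Sneg] using hx0
  have hzS' : -z ∈ Sneg S := by simpa [Sneg] using hzS
  obtain ⟨A, hh0, hmem, hnotU, hbl, hback⟩ := reduceUp (Sneg_lnat hS) hx0' L
    (fun i => -lb i) W M hW1
    (fun i j => by have := hx0W j i; simp only [Pi.neg_apply]; omega)
    (by
      intro i j hc y hy
      have hE : EbddP S j i := by
        obtain ⟨c, hcy⟩ := hc
        refine ⟨c, fun w hw => ?_⟩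
        have hw' : -w ∈ Sneg S := by simpa [Sneg] using hw
        have := hcy (-w) hw'
        simp only [Pi.neg_apply] at this
        omega
      have hyS : -y ∈ S := hy
      have := hKW j i hE (-y) hyS
      simp only [Pi.neg_apply] at this
      omega)
    (by
      intro i hLi y hy
      have hyS : -y ∈ S := hy
      have := hlbL i hLi (-y) hyS
      simp only [Pi.neg_apply] at this
      show y i ≤ -lb i
      omega)
    (fun i h => by show -lb i = M; rw [hlbM i h]; ring)
    (fun i => by
      have := hMx i
      show (-x0) i + 2 ≤ M - (n+1) * W
      simp only [Pi.neg_apply]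
      omega)
    (fun i h => by show -lb i + 2 ≤ M - (n+1) * W; exact hMu i h)
    (fun i => -bu i) (fun i => by show -bu i + 2 ≤ M - (n+1) * W; exact hMl i)
    hzS' (h0 := h0) (by simp only [Pi.neg_apply]; omega)
  refine ⟨A, hh0, ?_, hnotU, fun i hi => by have := hbl i hi; simp only [Pi.neg_apply] at this; omega,
    fun i j hE hi => ?_⟩
  · rw [mem_Sneg] at hmem
    have he : -(fun i => (-z) i - chi A i) = fun i => z i + chi A i := by
      funext i; simp only [Pi.neg_apply]; ring
    rwa [he] at hmem
  · apply hback j i _ hi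
    obtain ⟨c, hc⟩ := hE
    refine ⟨c, fun y hy => ?_⟩
    have hyS : -y ∈ S := hy
    have := hc (-y) hyS
    simp only [Pi.neg_apply] at this
    omega

end LNatAux
namespace LNatAux

variable {n : ℕ}

lemma main_decomp {S : Set (Fin n → ℤ)} (hS : IsLNatSet S) :
    ∃ bl bu : Fin n → ℤ, ∀ z ∈ S, ∃ t g : Fin n → ℤ,
      t ∈ S ∧ (∀ i, bl i ≤ t i ∧ t i ≤ bu i) ∧ g ∈ Gset S ∧ t + g = z := by
  classical
  obtain ⟨x0, hx0⟩ := hS.1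
  set ubound : Fin n → ℤ := fun i => if h : IupP S i then h.choose else 0 with hubdef
  have hubspec : ∀ i, IupP S i → ∀ y ∈ S, y i ≤ ubound i := by
    intro i hi y hy
    simp only [hubdef, dif_pos hi]
    exact hi.choose_spec y hy
  set lbound : Fin n → ℤ := fun i => if h : IlowP S i then h.choose else 0 with hlbdef
  have hlbspec : ∀ i, IlowP S i → ∀ y ∈ S, lbound i ≤ y i := by
    intro i hi y hy
    simp only [hlbdef, dif_pos hi]
    exact hi.choose_spec y hy
  set cb : Fin n → Fin n → ℤ := fun i j => if h : EbddP S i j then h.choose else 0 with hcbdef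
  have hcbspec : ∀ i j, EbddP S i j → ∀ y ∈ S, y j - y i ≤ cb i j := by
    intro i j hij y hy
    simp only [hcbdef, dif_pos hij]
    exact hij.choose_spec y hy
  set Sx : ℤ := ∑ i, |x0 i| with hSxdef
  set Sabs : ℤ := ∑ i, (|ubound i| + |lbound i| + |x0 i|) with hSabsdef
  set Kc : ℤ := ∑ i, ∑ j, |cb i j| with hKcdef
  set W : ℤ := Kc + 2 * Sx + 2 with hWdef
  set M : ℤ := ((n:ℤ)+1) * W + Sabs + 4 with hMdef
  set bu : Fin n → ℤ := fun i => if IupP S i then ubound i else M with hbudef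
  set bl : Fin n → ℤ := fun i => if IlowP S i then lbound i else -M with hbldef
  have hSx : ∀ i, |x0 i| ≤ Sx := fun i =>
    Finset.single_le_sum (f := fun i => |x0 i|) (fun _ _ => abs_nonneg _) (Finset.mem_univ i)
  have habs : ∀ i, |ubound i| + |lbound i| + |x0 i| ≤ Sabs := fun i =>
    Finset.single_le_sum (f := fun i => |ubound i| + |lbound i| + |x0 i|)
      (fun _ _ => by positivity) (Finset.mem_univ i)
  have hKc : ∀ i j, |cb i j| ≤ Kc := by
    intro i j
    have h1 : |cb i j| ≤ ∑ j', |cb i j'| :=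
      Finset.single_le_sum (f := fun j' => |cb i j'|) (fun _ _ => abs_nonneg _)
        (Finset.mem_univ j)
    have h2 : (∑ j', |cb i j'|) ≤ Kc :=
      Finset.single_le_sum (f := fun i' => ∑ j', |cb i' j'|)
        (fun _ _ => Finset.sum_nonneg fun _ _ => abs_nonneg _) (Finset.mem_univ i)
    omega
  have hSxnn : 0 ≤ Sx := Finset.sum_nonneg fun _ _ => abs_nonneg _
  have hKcnn : 0 ≤ Kc :=
    Finset.sum_nonneg fun _ _ => Finset.sum_nonneg fun _ _ => abs_nonneg _
  have hSabsnn : 0 ≤ Sabs := Finset.sum_nonneg fun _ _ => by positivity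
  have hW1 : 1 ≤ W := by omega
  have hMnn : 0 ≤ M := by
    have : 0 ≤ ((n:ℤ)+1) * W := by positivity
    omega
  have hMW : M - ((n:ℤ)+1) * W = Sabs + 4 := by rw [hMdef]; ring
  have hx0W : ∀ i j, 1 - W ≤ x0 j - x0 i := by
    intro i j
    have h1 := hSx i; have h2 := hSx j
    have h3 := neg_abs_le (x0 j); have h4 := le_abs_self (x0 i)
    omega
  have hKW : ∀ i j, EbddP S i j → ∀ y ∈ S, y j - y i ≤ W - 1 := by
    intro i j hij y hy
    have h1 := hcbspec i j hij y hy
    have h2 := hKc i j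
    have h3 := le_abs_self (cb i j)
    omega
  have hubU : ∀ i, IupP S i → ∀ y ∈ S, y i ≤ bu i := by
    intro i hi y hy
    have := hubspec i hi y hy
    simp only [hbudef, if_pos hi]
    omega
  have hubM : ∀ i, ¬ IupP S i → bu i = M := by
    intro i hi; simp only [hbudef, if_neg hi]
  have hlbL : ∀ i, IlowP S i → ∀ y ∈ S, bl i ≤ y i := by
    intro i hi y hy
    have := hlbspec i hi y hy
    simp only [hbldef, if_pos hi]
    omega
  have hlbM : ∀ i, ¬ IlowP S i → bl i = -M := by
    intro i hi; simp only [hbldef, if_neg hi]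
  have hxabs : ∀ i, |x0 i| ≤ Sabs := by
    intro i; have := habs i
    have h1 : 0 ≤ |ubound i| := abs_nonneg _
    have h2 : 0 ≤ |lbound i| := abs_nonneg _
    omega
  have hMx : ∀ i, x0 i + 2 ≤ M - ((n:ℤ)+1) * W := by
    intro i
    have := hxabs i; have := le_abs_self (x0 i)
    omega
  have hMx' : ∀ i, -x0 i + 2 ≤ M - ((n:ℤ)+1) * W := by
    intro i
    have := hxabs i; have := neg_abs_le (x0 i)
    omega
  have hMu : ∀ i, IupP S i → bu i + 2 ≤ M - ((n:ℤ)+1) * W := by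
    intro i hi
    have h1 := habs i
    have h2 := le_abs_self (ubound i)
    have h3 : 0 ≤ |lbound i| := abs_nonneg _
    have h4 : 0 ≤ |x0 i| := abs_nonneg _
    simp only [hbudef, if_pos hi]
    omega
  have hMl : ∀ i, bl i + 2 ≤ M - ((n:ℤ)+1) * W := by
    intro i
    by_cases hi : IlowP S i
    · have h1 := habs i
      have h2 := le_abs_self (lbound i)
      have h3 : 0 ≤ |ubound i| := abs_nonneg _
      have h4 : 0 ≤ |x0 i| := abs_nonneg _
      simp only [hbldef, if_pos hi]
      omega
    · simp only [hbldef, if_neg hi]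
      omega
  have hMu' : ∀ i, IlowP S i → -bl i + 2 ≤ M - ((n:ℤ)+1) * W := by
    intro i hi
    have h1 := habs i
    have h2 := neg_abs_le (lbound i)
    have h3 : 0 ≤ |ubound i| := abs_nonneg _
    have h4 : 0 ≤ |x0 i| := abs_nonneg _
    simp only [hbldef, if_pos hi]
    omega
  have hMl' : ∀ i, -bu i + 2 ≤ M - ((n:ℤ)+1) * W := by
    intro i
    by_cases hi : IupP S i
    · have h1 := habs i
      have h2 := neg_abs_le (ubound i)
      have h3 : 0 ≤ |lbound i| := abs_nonneg _
      have h4 : 0 ≤ |x0 i| := abs_nonneg _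
      simp only [hbudef, if_pos hi]
      omega
    · simp only [hbudef, if_neg hi]
      omega
  -- main induction on the violation measure
  refine ⟨bl, bu, ?_⟩
  suffices h : ∀ N : ℕ, ∀ z ∈ S, (∑ i, ((z i - bu i).toNat + (bl i - z i).toNat)) ≤ N →
      ∃ t g : Fin n → ℤ, t ∈ S ∧ (∀ i, bl i ≤ t i ∧ t i ≤ bu i) ∧ g ∈ Gset S ∧ t + g = z by
    intro z hz
    exact h _ z hz le_rfl
  intro N
  induction N with
  | zero =>
    intro z hz hmu
    refine ⟨z, 0, hz, fun i => ?_, zero_mem_Gset S, by simp⟩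
    have := Finset.sum_le_sum_of_subset (Finset.subset_univ {i})
      (f := fun i => ((z i - bu i).toNat + (bl i - z i).toNat))
    simp only [Finset.sum_singleton] at this
    omega
  | succ N ih =>
    intro z hz hmu
    by_cases hbox : ∀ i, bl i ≤ z i ∧ z i ≤ bu i
    · exact ⟨z, 0, hz, hbox, zero_mem_Gset S, by simp⟩
    · push_neg at hbox
      obtain ⟨h0, hv⟩ := hbox
      rcases lt_or_ge (z h0) (bl h0) with hlow | hge
      · -- lower violation
        obtain ⟨A, hh0, hmem, hnotL, hup, hfwd⟩ := reduceDown hS hx0 (IlowP S) bl W M hW1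
          hx0W hKW hlbL hlbM hMx' hMu' bu hMl' hz hlow
        have hlt : (∑ i, (((z i + chi A i) - bu i).toNat + (bl i - (z i + chi A i)).toNat))
            < ∑ i, ((z i - bu i).toNat + (bl i - z i).toNat) := by
          apply Finset.sum_lt_sum
          · intro k _
            rcases chi_cases A k with hc | hc
            · rw [hc]; omega
            · have hk : k ∈ A := by
                by_contra hkA; rw [chi_not_mem hkA] at hc; omega
              have := hup k hk
              rw [hc]; omega
          · refine ⟨h0, Finset.mem_univ h0, ?_⟩
            rw [chi_mem hh0]
            have := hup h0 hh0
            omega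
        obtain ⟨t, g, htS, htbox, hgG, htg⟩ := ih (fun i => z i + chi A i) hmem
          (Nat.lt_succ_iff.mp (lt_of_lt_of_le hlt hmu))
        refine ⟨t, g + (fun i => -(chi A i)), htS, htbox, ?_, ?_⟩
        · apply Gset_add hgG
          refine ⟨fun i hi => ?_, fun i hi => ?_, fun i j hij => ?_⟩
          · show (0:ℤ) ≤ -(chi A i)
            have : i ∉ A := fun hc => hnotL i hc hi
            rw [chi_not_mem this]
            omega
          · show -(chi A i) ≤ 0
            rcases chi_cases A i with hc | hc <;> rw [hc] <;> omega
          · show -(chi A j) ≤ -(chi A i)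
            have := hfwd i j hij
            by_cases hiA : i ∈ A
            · rw [chi_mem hiA, chi_mem (this hiA)]
            · rw [chi_not_mem hiA]
              rcases chi_cases A j with hc | hc <;> rw [hc] <;> omega
        · funext i
          have := congrFun htg i
          simp only [Pi.add_apply] at this ⊢
          omega
      · -- upper violation
        have hup0 : bu h0 < z h0 := hv hge
        obtain ⟨A, hh0, hmem, hnotU, hlo, hback⟩ := reduceUp hS hx0 (IupP S) bu W M hW1
          hx0W (fun i j hc => hKW i j hc) hubU hubM hMx hMu bl hMl hz hup0
        have hlt : (∑ i, (((z i - chi A i) - bu i).toNat + (bl i - (z i - chi A i)).toNat))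
            < ∑ i, ((z i - bu i).toNat + (bl i - z i).toNat) := by
          apply Finset.sum_lt_sum
          · intro k _
            rcases chi_cases A k with hc | hc
            · rw [hc]; omega
            · have hk : k ∈ A := by
                by_contra hkA; rw [chi_not_mem hkA] at hc; omega
              have := hlo k hk
              rw [hc]; omega
          · refine ⟨h0, Finset.mem_univ h0, ?_⟩
            rw [chi_mem hh0]
            have := hlo h0 hh0
            omega
        obtain ⟨t, g, htS, htbox, hgG, htg⟩ := ih (fun i => z i - chi A i) hmem
          (Nat.lt_succ_iff.mp (lt_of_lt_of_le hlt hmu))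
        refine ⟨t, g + chi A, htS, htbox, ?_, ?_⟩
        · apply Gset_add hgG
          refine ⟨fun i hi => ?_, fun i hi => ?_, fun i j hij => ?_⟩
          · rcases chi_cases A i with hc | hc <;> rw [hc] <;> omega
          · have : i ∉ A := fun hc => hnotU i hc hi
            rw [chi_not_mem this]
          · have := hback i j hij
            by_cases hjA : j ∈ A
            · rw [chi_mem hjA, chi_mem (this hjA)]
            · rw [chi_not_mem hjA]
              rcases chi_cases A i with hc | hc <;> rw [hc] <;> omega
        · funext i
          have := congrFun htg i
          simp only [Pi.add_apply] at this ⊢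
          omega

end LNatAux
/-- Every L♮-convex set `S ⊆ ℤ^n` decomposes as `S = T + G` with a bounded
L♮-convex set `T` and a conic L♮-convex set `G`. -/
theorem lnatSet_decomposition {n : ℕ} (S : Set (Fin n → ℤ))
    (hS : IsLNatSet S) :
    ∃ T G : Set (Fin n → ℤ),
      IsLNatSet T ∧ Bornology.IsBounded (coeZ '' T) ∧
      IsLNatSet G ∧ IsConeSet (convZ G) ∧
      S = T + G := by
  classical
  open LNatAux in
  obtain ⟨bl, bu, hdec⟩ := LNatAux.main_decomp hS
  obtain ⟨x0, hx0⟩ := hS.1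
  set T : Set (Fin n → ℤ) := {t ∈ S | ∀ i, bl i ≤ t i ∧ t i ≤ bu i} with hTdef
  refine ⟨T, LNatAux.Gset S, ?_, ?_, LNatAux.Gset_lnat, ?_, ?_⟩
  · -- T is L♮
    constructor
    · obtain ⟨t, g, htS, htbox, hgG, htg⟩ := hdec x0 hx0
      exact ⟨t, htS, htbox⟩
    · rintro x ⟨hxS, hxbox⟩ y ⟨hyS, hybox⟩
      refine ⟨⟨(hS.2 x hxS y hyS).1, fun i => ?_⟩, ⟨(hS.2 x hxS y hyS).2, fun i => ?_⟩⟩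
      · obtain ⟨h1, h2⟩ := hxbox i
        obtain ⟨h3, h4⟩ := hybox i
        constructor
        · show bl i ≤ ⌈(x i + y i : ℚ) / 2⌉
          calc bl i = ⌈((bl i : ℤ) : ℚ)⌉ := (Int.ceil_intCast _).symm
          _ ≤ ⌈(x i + y i : ℚ) / 2⌉ := by
              apply Int.ceil_le_ceil
              have e1 : ((bl i : ℤ) : ℚ) ≤ (x i : ℚ) := by exact_mod_cast h1
              have e2 : ((bl i : ℤ) : ℚ) ≤ (y i : ℚ) := by exact_mod_cast h3
              push_cast
              linarith
        · show ⌈(x i + y i : ℚ) / 2⌉ ≤ bu i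
          apply Int.ceil_le.mpr
          have e1 : (x i : ℚ) ≤ ((bu i : ℤ) : ℚ) := by exact_mod_cast h2
          have e2 : (y i : ℚ) ≤ ((bu i : ℤ) : ℚ) := by exact_mod_cast h4
          push_cast at *
          linarith
      · obtain ⟨h1, h2⟩ := hxbox i
        obtain ⟨h3, h4⟩ := hybox i
        constructor
        · show bl i ≤ ⌊(x i + y i : ℚ) / 2⌋
          apply Int.le_floor.mpr
          have e1 : ((bl i : ℤ) : ℚ) ≤ (x i : ℚ) := by exact_mod_cast h1
          have e2 : ((bl i : ℤ) : ℚ) ≤ (y i : ℚ) := by exact_mod_cast h3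
          push_cast at *
          linarith
        · show ⌊(x i + y i : ℚ) / 2⌋ ≤ bu i
          calc ⌊(x i + y i : ℚ) / 2⌋ ≤ ⌊((bu i : ℤ) : ℚ)⌋ := by
                apply Int.floor_le_floor
                have e1 : (x i : ℚ) ≤ ((bu i : ℤ) : ℚ) := by exact_mod_cast h2
                have e2 : (y i : ℚ) ≤ ((bu i : ℤ) : ℚ) := by exact_mod_cast h4
                push_cast at *
                linarith
          _ = bu i := Int.floor_intCast _
  · -- T is bounded
    set R : ℝ := (∑ i, ((|bl i| : ℝ) + |bu i|)) + 1 with hRdef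
    have hRnn : 0 ≤ R := by
      have : (0:ℝ) ≤ ∑ i, ((|bl i| : ℝ) + |bu i|) :=
        Finset.sum_nonneg fun i _ => by positivity
      rw [hRdef]; linarith
    apply Metric.isBounded_closedBall (x := (0 : Fin n → ℝ)) (r := R) |>.subset
    rintro x ⟨t, ⟨htS, htbox⟩, rfl⟩
    rw [Metric.mem_closedBall]
    rw [dist_pi_le_iff hRnn]
    intro i
    rw [Real.dist_eq]
    have h1 := (htbox i).1
    have h2 := (htbox i).2
    have hti : |(t i : ℝ)| ≤ (|bl i| : ℝ) + |bu i| := by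
      rw [abs_le]
      have e1 := neg_abs_le (bl i)
      have e2 := le_abs_self (bu i)
      constructor
      · have : (-(|bl i| + |bu i|) : ℤ) ≤ t i := by
          have := abs_nonneg (bu i); omega
        calc (-((|bl i| : ℝ) + |bu i|)) = ((-(|bl i| + |bu i|) : ℤ) : ℝ) := by push_cast; ring
        _ ≤ (t i : ℝ) := by exact_mod_cast this
      · have : t i ≤ |bl i| + |bu i| := by
          have := abs_nonneg (bl i); omega
        calc (t i : ℝ) ≤ ((|bl i| + |bu i| : ℤ) : ℝ) := by exact_mod_cast this
        _ = (|bl i| : ℝ) + |bu i| := by push_cast; ring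
    have hsum : ((|bl i| : ℝ) + |bu i|) ≤ ∑ j, ((|bl j| : ℝ) + |bu j|) :=
      Finset.single_le_sum (f := fun j => ((|bl j| : ℝ) + |bu j|))
        (fun j _ => by positivity) (Finset.mem_univ i)
    have : coeZ t i - (0 : Fin n → ℝ) i = (t i : ℝ) := by simp [coeZ]
    rw [this]
    rw [hRdef]
    calc |(t i : ℝ)| ≤ (|bl i| : ℝ) + |bu i| := hti
    _ ≤ (∑ j, ((|bl j| : ℝ) + |bu j|)) + 1 := by linarith
  · -- cone
    intro x hx lam hlam
    have hsub : lam • (coeZ '' LNatAux.Gset S) ⊆ convexHull ℝ (coeZ '' LNatAux.Gset S) := by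
      rintro y ⟨w, ⟨d, hdG, rfl⟩, rfl⟩
      set m : ℕ := ⌊lam⌋.toNat with hmdef
      have hm1 : (m : ℝ) ≤ lam := by
        have h0 : (0:ℤ) ≤ ⌊lam⌋ := Int.le_floor.mpr (by exact_mod_cast hlam)
        have := Int.floor_le lam
        rw [hmdef]
        calc ((⌊lam⌋.toNat : ℕ) : ℝ) = ((⌊lam⌋ : ℤ) : ℝ) := by exact_mod_cast Int.toNat_of_nonneg h0
        _ ≤ lam := this
      have hm2 : lam ≤ (m : ℝ) + 1 := by
        have h0 : (0:ℤ) ≤ ⌊lam⌋ := Int.le_floor.mpr (by exact_mod_cast hlam)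
        have := le_of_lt (Int.lt_floor_add_one lam)
        rw [hmdef]
        calc lam ≤ ((⌊lam⌋ : ℤ) : ℝ) + 1 := this
        _ = ((⌊lam⌋.toNat : ℕ) : ℝ) + 1 := by
            congr 1
            exact_mod_cast (Int.toNat_of_nonneg h0).symm
      have hp : coeZ (fun i => ((m:ℕ) : ℤ) * d i) ∈ coeZ '' LNatAux.Gset S :=
        ⟨_, LNatAux.Gset_nsmul hdG m, rfl⟩
      have hq : coeZ (fun i => (((m+1):ℕ) : ℤ) * d i) ∈ coeZ '' LNatAux.Gset S :=
        ⟨_, LNatAux.Gset_nsmul hdG (m+1), rfl⟩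
      have hcomb : lam • coeZ d = ((m:ℝ) + 1 - lam) • coeZ (fun i => ((m:ℕ) : ℤ) * d i)
          + (lam - (m:ℝ)) • coeZ (fun i => (((m+1):ℕ) : ℤ) * d i) := by
        funext i
        simp only [Pi.add_apply, Pi.smul_apply, smul_eq_mul, coeZ]
        push_cast
        ring
      show lam • coeZ d ∈ convexHull ℝ (coeZ '' LNatAux.Gset S)
      rw [hcomb]
      have hcvx := convex_convexHull ℝ (coeZ '' LNatAux.Gset S)
      exact hcvx (subset_convexHull ℝ _ hp) (subset_convexHull ℝ _ hq)
        (by linarith) (by linarith) (by ring)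
    have h1 : lam • x ∈ lam • convexHull ℝ (coeZ '' LNatAux.Gset S) :=
      Set.smul_mem_smul_set hx
    rw [← convexHull_smul] at h1
    exact convexHull_min hsub (convex_convexHull ℝ _) h1
  · -- S = T + G
    ext z
    constructor
    · intro hz
      obtain ⟨t, g, htS, htbox, hgG, htg⟩ := hdec z hz
      exact Set.mem_add.mpr ⟨t, ⟨htS, htbox⟩, g, hgG, htg⟩
    · intro hz
      obtain ⟨t, ⟨htS, _⟩, g, hgG, rfl⟩ := Set.mem_add.mp hz
      exact LNatAux.add_Gset_mem hS htS hgG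
end
end

section
/- Every L²♮-convex set S ⊆ ℤ^n can be represented as S = T + G, where T is a bounded L²♮-convex set, G is a conic L²♮-convex set, and T + G denotes the Minkowski sum in ℤ^n. -/
open Set Pointwise

noncomputable section

namespace L2D


/-- ceil midpoint -/
def cm {m : ℕ} (x y : Fin m → ℤ) : Fin m → ℤ := fun i => ⌈(x i + y i : ℚ) / 2⌉
/-- floor midpoint -/
def fm {m : ℕ} (x y : Fin m → ℤ) : Fin m → ℤ := fun i => ⌊(x i + y i : ℚ) / 2⌋

lemma ceil2 (a : ℤ) : 2 * ⌈(a:ℚ)/2⌉ - 1 ≤ a ∧ a ≤ 2*⌈(a:ℚ)/2⌉ := by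
  have h1 : (a:ℚ) ≤ 2*(⌈(a:ℚ)/2⌉:ℤ) := by
    have := Int.le_ceil ((a:ℚ)/2); push_cast; linarith
  have h2 : (2*(⌈(a:ℚ)/2⌉:ℤ):ℚ) < a + 2 := by
    have := Int.ceil_lt_add_one ((a:ℚ)/2); push_cast; linarith
  have h1' : a ≤ 2*⌈(a:ℚ)/2⌉ := by exact_mod_cast h1
  have h2' : 2*⌈(a:ℚ)/2⌉ < a + 2 := by exact_mod_cast h2
  omega

lemma floor2 (a : ℤ) : 2 * ⌊(a:ℚ)/2⌋ ≤ a ∧ a ≤ 2*⌊(a:ℚ)/2⌋ + 1 := by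
  have h1 : (2*(⌊(a:ℚ)/2⌋:ℤ):ℚ) ≤ a := by
    have := Int.floor_le ((a:ℚ)/2); push_cast; linarith
  have h2 : (a:ℚ) < 2*(⌊(a:ℚ)/2⌋:ℤ) + 2 := by
    have := Int.lt_floor_add_one ((a:ℚ)/2); push_cast; linarith
  have h1' : 2*⌊(a:ℚ)/2⌋ ≤ a := by exact_mod_cast h1
  have h2' : a < 2*⌊(a:ℚ)/2⌋ + 2 := by exact_mod_cast h2
  omega

lemma ceil_half_char (a b : ℤ) (h1 : 2*b - 1 ≤ a) (h2 : a ≤ 2*b) : ⌈(a:ℚ)/2⌉ = b := by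
  have := ceil2 a; omega

lemma floor_half_char (a b : ℤ) (h1 : 2*b ≤ a) (h2 : a ≤ 2*b + 1) : ⌊(a:ℚ)/2⌋ = b := by
  have := floor2 a; omega

lemma cm_bounds {m : ℕ} (x y : Fin m → ℤ) (i : Fin m) :
    2 * cm x y i - 1 ≤ x i + y i ∧ x i + y i ≤ 2 * cm x y i := by
  have h := ceil2 (x i + y i)
  push_cast at h
  exact h

lemma fm_bounds {m : ℕ} (x y : Fin m → ℤ) (i : Fin m) :
    2 * fm x y i ≤ x i + y i ∧ x i + y i ≤ 2 * fm x y i + 1 := by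
  have h := floor2 (x i + y i)
  push_cast at h
  exact h

/-- midpoint-closed set -/
def MidCl {m : ℕ} (A : Set (Fin m → ℤ)) : Prop :=
  ∀ x ∈ A, ∀ y ∈ A, cm x y ∈ A ∧ fm x y ∈ A

lemma sup_apply' {m : ℕ} (x y : Fin m → ℤ) (i : Fin m) : (x ⊔ y) i = max (x i) (y i) := rfl
lemma inf_apply' {m : ℕ} (x y : Fin m → ℤ) (i : Fin m) : (x ⊓ y) i = min (x i) (y i) := rfl

lemma sup_inf_mem {m : ℕ} {A : Set (Fin m → ℤ)} (hA : MidCl A) :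
    ∀ N : ℕ, ∀ x ∈ A, ∀ y ∈ A, (∑ i, (x i - y i).natAbs) ≤ N → x ⊔ y ∈ A ∧ x ⊓ y ∈ A := by
  intro N
  induction N using Nat.strong_induction_on with
  | _ N IH =>
  intro x hx y hy hN
  by_cases hsmall : ∀ i, (x i - y i).natAbs ≤ 1
  · constructor
    · have he : x ⊔ y = cm x y := by
        funext i
        have h := cm_bounds x y i; have h2 := hsmall i
        rw [sup_apply']
        have e1 := max_choice (x i) (y i)
        have l1 := le_max_left (x i) (y i); have r1 := le_max_right (x i) (y i)
        omega
      rw [he]; exact (hA x hx y hy).1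
    · have he : x ⊓ y = fm x y := by
        funext i
        have h := fm_bounds x y i; have h2 := hsmall i
        rw [inf_apply']
        have e1 := min_choice (x i) (y i)
        have l1 := min_le_left (x i) (y i); have r1 := min_le_right (x i) (y i)
        omega
      rw [he]; exact (hA x hx y hy).2
  · push_neg at hsmall
    obtain ⟨i0, hi0⟩ := hsmall
    have hcmA := (hA x hx y hy).1
    have hfmA := (hA x hx y hy).2
    set c := cm x y with hc
    set f := fm x y with hf
    have hb : ∀ i, 2 * c i - 1 ≤ x i + y i ∧ x i + y i ≤ 2 * c i := cm_bounds x y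
    have hbf : ∀ i, 2 * f i ≤ x i + y i ∧ x i + y i ≤ 2 * f i + 1 := fm_bounds x y
    have hsum : ∀ z w : Fin m → ℤ, (∀ i, (z i - w i).natAbs ≤ (x i - y i).natAbs) →
        ((z i0 - w i0).natAbs < (x i0 - y i0).natAbs) → (∑ i, (z i - w i).natAbs) < N := by
      intro z w hle hlt
      calc (∑ i, (z i - w i).natAbs) < ∑ i, (x i - y i).natAbs :=
            Finset.sum_lt_sum (fun i _ => hle i) ⟨i0, Finset.mem_univ _, hlt⟩
        _ ≤ N := hN
    have k1 : (∑ i, (x i - c i).natAbs) < N :=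
      hsum _ _ (fun i => by have := hb i; omega) (by have := hb i0; omega)
    have k2 : (∑ i, (y i - c i).natAbs) < N :=
      hsum _ _ (fun i => by have := hb i; omega) (by have := hb i0; omega)
    have k1f : (∑ i, (x i - f i).natAbs) < N :=
      hsum _ _ (fun i => by have := hbf i; omega) (by have := hbf i0; omega)
    have k2f : (∑ i, (y i - f i).natAbs) < N :=
      hsum _ _ (fun i => by have := hbf i; omega) (by have := hbf i0; omega)
    have hxc := IH _ k1 x hx c hcmA le_rfl
    have hyc := IH _ k2 y hy c hcmA le_rfl
    have hxf := IH _ k1f x hx f hfmA le_rfl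
    have hyf := IH _ k2f y hy f hfmA le_rfl
    have k3 : (∑ i, ((x ⊔ c) i - (y ⊔ c) i).natAbs) < N := by
      apply hsum
      · intro i
        rw [sup_apply', sup_apply']
        have := hb i
        have e1 := max_choice (x i) (c i)
        have l1 := le_max_left (x i) (c i); have r1 := le_max_right (x i) (c i)
        have e2 := max_choice (y i) (c i)
        have l2 := le_max_left (y i) (c i); have r2 := le_max_right (y i) (c i)
        omega
      · rw [sup_apply', sup_apply']
        have := hb i0
        have e1 := max_choice (x i0) (c i0)
        have l1 := le_max_left (x i0) (c i0); have r1 := le_max_right (x i0) (c i0)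
        have e2 := max_choice (y i0) (c i0)
        have l2 := le_max_left (y i0) (c i0); have r2 := le_max_right (y i0) (c i0)
        omega
    have k3f : (∑ i, ((x ⊓ f) i - (y ⊓ f) i).natAbs) < N := by
      apply hsum
      · intro i
        rw [inf_apply', inf_apply']
        have := hbf i
        have e1 := min_choice (x i) (f i)
        have l1 := min_le_left (x i) (f i); have r1 := min_le_right (x i) (f i)
        have e2 := min_choice (y i) (f i)
        have l2 := min_le_left (y i) (f i); have r2 := min_le_right (y i) (f i)
        omega
      · rw [inf_apply', inf_apply']
        have := hbf i0
        have e1 := min_choice (x i0) (f i0)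
        have l1 := min_le_left (x i0) (f i0); have r1 := min_le_right (x i0) (f i0)
        have e2 := min_choice (y i0) (f i0)
        have l2 := min_le_left (y i0) (f i0); have r2 := min_le_right (y i0) (f i0)
        omega
    have hsup := (IH _ k3 _ hxc.1 _ hyc.1 le_rfl).1
    have hinf := (IH _ k3f _ hxf.2 _ hyf.2 le_rfl).2
    constructor
    · have he : x ⊔ y = (x ⊔ c) ⊔ (y ⊔ c) := by
        funext i
        rw [sup_apply', sup_apply', sup_apply', sup_apply']
        have := hb i
        have e1 := max_choice (x i) (c i)
        have l1 := le_max_left (x i) (c i); have r1 := le_max_right (x i) (c i)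
        have e2 := max_choice (y i) (c i)
        have l2 := le_max_left (y i) (c i); have r2 := le_max_right (y i) (c i)
        have e3 := max_choice (x i) (y i)
        have l3 := le_max_left (x i) (y i); have r3 := le_max_right (x i) (y i)
        have e4 := max_choice (max (x i) (c i)) (max (y i) (c i))
        have l4 := le_max_left (max (x i) (c i)) (max (y i) (c i))
        have r4 := le_max_right (max (x i) (c i)) (max (y i) (c i))
        omega
      rw [he]; exact hsup
    · have he : x ⊓ y = (x ⊓ f) ⊓ (y ⊓ f) := by
        funext i
        rw [inf_apply', inf_apply', inf_apply', inf_apply']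
        have := hbf i
        have e1 := min_choice (x i) (f i)
        have l1 := min_le_left (x i) (f i); have r1 := min_le_right (x i) (f i)
        have e2 := min_choice (y i) (f i)
        have l2 := min_le_left (y i) (f i); have r2 := min_le_right (y i) (f i)
        have e3 := min_choice (x i) (y i)
        have l3 := min_le_left (x i) (y i); have r3 := min_le_right (x i) (y i)
        have e4 := min_choice (min (x i) (f i)) (min (y i) (f i))
        have l4 := min_le_left (min (x i) (f i)) (min (y i) (f i))
        have r4 := min_le_right (min (x i) (f i)) (min (y i) (f i))
        omega
      rw [he]; exact hinf


section Hat
variable {n : ℕ}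

def hat (x : Fin n → ℤ) : Fin (n+1) → ℤ := Fin.cons 0 x

@[simp] lemma hat_zero (x : Fin n → ℤ) : hat x 0 = 0 := rfl
@[simp] lemma hat_succ (x : Fin n → ℤ) (i : Fin n) : hat x i.succ = x i := by
  simp [hat]

def Shat (S : Set (Fin n → ℤ)) : Set (Fin (n+1) → ℤ) :=
  {w | ∃ x ∈ S, ∃ c : ℤ, w = fun k => hat x k + c}

lemma mem_Shat_of_mem {S : Set (Fin n → ℤ)} {x : Fin n → ℤ} (hx : x ∈ S) : hat x ∈ Shat S :=
  ⟨x, hx, 0, by funext k; simp⟩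

lemma mem_of_hat_mem {S : Set (Fin n → ℤ)} {x : Fin n → ℤ} (hx : hat x ∈ Shat S) : x ∈ S := by
  obtain ⟨y, hy, c, hc⟩ := hx
  have h0 : hat x 0 = hat y 0 + c := by rw [hc]
  simp at h0
  have : x = y := by
    funext i
    have := congrFun hc i.succ
    simp [← h0] at this
    simpa using this
  rwa [this]

lemma Shat_translate {S : Set (Fin n → ℤ)} {w : Fin (n+1) → ℤ} (hw : w ∈ Shat S) (c : ℤ) :
    (fun k => w k + c) ∈ Shat S := by
  obtain ⟨x, hx, e, he⟩ := hw
  exact ⟨x, hx, e + c, by funext k; rw [he]; ring⟩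

lemma Shat_midcl {S : Set (Fin n → ℤ)}
    (hS : ∀ x ∈ S, ∀ y ∈ S, cm x y ∈ S ∧ fm x y ∈ S) : MidCl (Shat S) := by
  rintro w ⟨x, hx, c, rfl⟩ v ⟨y, hy, e, rfl⟩
  rcases Int.even_or_odd (c + e) with ⟨d, hd⟩ | ⟨d, hd⟩
  · constructor
    · refine ⟨cm x y, (hS x hx y hy).1, d, ?_⟩
      funext k
      show ⌈((hat x k + c : ℤ) + (hat y k + e : ℤ) : ℚ)/2⌉ = hat (cm x y) k + d
      rw [show ((hat x k + c : ℤ) + (hat y k + e : ℤ) : ℚ)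
          = (((hat x k + hat y k + c + e : ℤ)) : ℚ) by push_cast; ring]
      induction k using Fin.cases with
      | zero => simp only [hat_zero]; apply ceil_half_char <;> omega
      | succ i =>
        simp only [hat_succ]
        have := cm_bounds x y i
        apply ceil_half_char <;> omega
    · refine ⟨fm x y, (hS x hx y hy).2, d, ?_⟩
      funext k
      show ⌊((hat x k + c : ℤ) + (hat y k + e : ℤ) : ℚ)/2⌋ = hat (fm x y) k + d
      rw [show ((hat x k + c : ℤ) + (hat y k + e : ℤ) : ℚ)
          = (((hat x k + hat y k + c + e : ℤ)) : ℚ) by push_cast; ring]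
      induction k using Fin.cases with
      | zero => simp only [hat_zero]; apply floor_half_char <;> omega
      | succ i =>
        simp only [hat_succ]
        have := fm_bounds x y i
        apply floor_half_char <;> omega
  · constructor
    · refine ⟨fm x y, (hS x hx y hy).2, d + 1, ?_⟩
      funext k
      show ⌈((hat x k + c : ℤ) + (hat y k + e : ℤ) : ℚ)/2⌉ = hat (fm x y) k + (d+1)
      rw [show ((hat x k + c : ℤ) + (hat y k + e : ℤ) : ℚ)
          = (((hat x k + hat y k + c + e : ℤ)) : ℚ) by push_cast; ring]
      induction k using Fin.cases with
      | zero => simp only [hat_zero]; apply ceil_half_char <;> omega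
      | succ i =>
        simp only [hat_succ]
        have := fm_bounds x y i
        apply ceil_half_char <;> omega
    · refine ⟨cm x y, (hS x hx y hy).1, d, ?_⟩
      funext k
      show ⌊((hat x k + c : ℤ) + (hat y k + e : ℤ) : ℚ)/2⌋ = hat (cm x y) k + d
      rw [show ((hat x k + c : ℤ) + (hat y k + e : ℤ) : ℚ)
          = (((hat x k + hat y k + c + e : ℤ)) : ℚ) by push_cast; ring]
      induction k using Fin.cases with
      | zero => simp only [hat_zero]; apply floor_half_char <;> omega
      | succ i =>
        simp only [hat_succ]
        have := cm_bounds x y i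
        apply floor_half_char <;> omega

lemma Shat_lattice {S : Set (Fin n → ℤ)}
    (hS : ∀ x ∈ S, ∀ y ∈ S, cm x y ∈ S ∧ fm x y ∈ S) :
    ∀ w ∈ Shat S, ∀ v ∈ Shat S, w ⊔ v ∈ Shat S ∧ w ⊓ v ∈ Shat S := by
  intro w hw v hv
  exact sup_inf_mem (Shat_midcl hS) _ w hw v hv le_rfl

/-- Feasibility predicate: every "difference" of z is weakly dominated by some element. -/
def Feas (S : Set (Fin n → ℤ)) (z : Fin (n+1) → ℤ) : Prop :=
  ∀ i j : Fin (n+1), ∃ w ∈ Shat S, z j - z i ≤ w j - w i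

lemma feas_of_mem {S : Set (Fin n → ℤ)} {z : Fin (n+1) → ℤ} (hz : z ∈ Shat S) : Feas S z :=
  fun _ _ => ⟨z, hz, le_rfl⟩

lemma mem_of_feas {S : Set (Fin n → ℤ)} {z : Fin (n+1) → ℤ}
    (hS : ∀ x ∈ S, ∀ y ∈ S, cm x y ∈ S ∧ fm x y ∈ S) (hz : Feas S z) : z ∈ Shat S := by
  classical
  have hlat := Shat_lattice hS
  -- witnesses: for each (i,j), some w ∈ Shat with w j - w i ≤ z j - z i
  have hwit : ∀ i j : Fin (n+1), ∃ w, w ∈ Shat S ∧ w j - w i ≤ z j - z i := by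
    intro i j
    obtain ⟨w, hw, h⟩ := hz j i
    exact ⟨w, hw, by omega⟩
  choose w hw hwle using hwit
  have hne : (Finset.univ : Finset (Fin (n+1))).Nonempty := Finset.univ_nonempty
  -- v i := meet over j of (w i j translated so that its i-coordinate is z i)
  set t : Fin (n+1) → Fin (n+1) → (Fin (n+1) → ℤ) :=
    fun i j => (fun k => w i j k + (z i - w i j i)) with ht
  have htS : ∀ i j, t i j ∈ Shat S := fun i j => Shat_translate (hw i j) _
  set v : Fin (n+1) → (Fin (n+1) → ℤ) := fun i => Finset.univ.inf' hne (t i) with hv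
  have hvS : ∀ i, v i ∈ Shat S := by
    intro i
    exact Finset.inf'_mem (Shat S) (fun a ha b hb => (hlat a ha b hb).2) _ hne _
      (fun j _ => htS i j)
  have hvi : ∀ i, v i i = z i := by
    intro i
    show (Finset.univ.inf' hne (t i)) i = z i
    rw [Finset.inf'_apply]
    have : ∀ j ∈ Finset.univ, t i j i = z i := by intro j _; simp [ht]
    rw [Finset.inf'_congr hne rfl this]
    exact Finset.inf'_const _ _
  have hvle : ∀ i k, v i k ≤ z k := by
    intro i k
    show (Finset.univ.inf' hne (t i)) k ≤ z k
    rw [Finset.inf'_apply]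
    have h1 : t i k k ≤ z k := by
      have := hwle i k
      simp only [ht]
      omega
    exact le_trans (Finset.inf'_le _ (Finset.mem_univ k)) h1
  have hzv : z = Finset.univ.sup' hne v := by
    funext k
    rw [Finset.sup'_apply]
    apply le_antisymm
    · exact Finset.le_sup'_of_le _ (Finset.mem_univ k) (le_of_eq (hvi k).symm)
    · exact Finset.sup'_le _ _ (fun i _ => hvle i k)
  rw [hzv]
  exact Finset.sup'_mem (Shat S) (fun a ha b hb => (hlat a ha b hb).1) _ hne _
    (fun i _ => hvS i)

lemma mem_iff_feas {S : Set (Fin n → ℤ)}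
    (hS : ∀ x ∈ S, ∀ y ∈ S, cm x y ∈ S ∧ fm x y ∈ S) (x : Fin n → ℤ) :
    x ∈ S ↔ Feas S (hat x) :=
  ⟨fun h => feas_of_mem (mem_Shat_of_mem h),
   fun h => mem_of_hat_mem (mem_of_feas hS h)⟩

end Hat

lemma gap {n : ℕ} (D : ℤ) (hD : 0 ≤ D) (v : Fin n → ℤ) :
    ∃ K : ℤ, D + 1 ≤ K ∧ K ≤ (D+1)*(n+1)+1 ∧ ∀ i, v i < K - D ∨ K ≤ v i := by
  by_contra hcon
  push_neg at hcon
  have hK : ∀ m : Fin (n+1), ∃ i : Fin n,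
      ((D+1)*((m:ℤ)+1)+1) - D ≤ v i ∧ v i < (D+1)*((m:ℤ)+1)+1 := by
    intro m
    have h1 : D + 1 ≤ (D+1)*((m:ℤ)+1)+1 := by nlinarith [Int.natCast_nonneg (m:ℕ)]
    have h2 : (D+1)*((m:ℤ)+1)+1 ≤ (D+1)*(n+1)+1 := by
      have hm : (m:ℤ) + 1 ≤ (n:ℤ) + 1 := by
        have := m.isLt; omega
      nlinarith
    obtain ⟨i, hi1, hi2⟩ := hcon _ h1 h2
    exact ⟨i, by omega, by omega⟩
  choose f hf1 hf2 using hK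
  have hinj : Function.Injective f := by
    intro a b hab
    have h1a := hf1 a; have h2a := hf2 a
    have h1b := hf1 b; have h2b := hf2 b
    rw [hab] at h1a h2a
    have : (a:ℤ) = (b:ℤ) := by
      rcases lt_trichotomy (a:ℤ) (b:ℤ) with h | h | h
      · exfalso
        have : (D+1)*((a:ℤ)+1) + (D+1) ≤ (D+1)*((b:ℤ)+1) := by nlinarith
        omega
      · exact h
      · exfalso
        have : (D+1)*((b:ℤ)+1) + (D+1) ≤ (D+1)*((a:ℤ)+1) := by nlinarith
        omega
    exact Fin.ext (by exact_mod_cast this)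
  have := Fintype.card_le_of_injective f hinj
  simp only [Fintype.card_fin] at this
  omega

section Decomp
variable {n : ℕ}

/-- the pair (i,j) admits unbounded differences over `Shat S` -/
def Unbdd (S : Set (Fin n → ℤ)) (i j : Fin (n+1)) : Prop :=
  ∀ b : ℤ, ∃ w ∈ Shat S, b ≤ w j - w i

/-- the recession monoid -/
def Gset (S : Set (Fin n → ℤ)) : Set (Fin n → ℤ) :=
  {g | ∀ i j, Unbdd S i j ∨ hat g j - hat g i ≤ 0}

lemma hat_add (x y : Fin n → ℤ) : ∀ k, hat (x + y) k = hat x k + hat y k := by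
  intro k
  induction k using Fin.cases with
  | zero => simp
  | succ i => simp

lemma hat_sub (x y : Fin n → ℤ) : ∀ k, hat (x - y) k = hat x k - hat y k := by
  intro k
  induction k using Fin.cases with
  | zero => simp
  | succ i => simp

lemma hat_zero_fun : ∀ k, hat (0 : Fin n → ℤ) k = 0 := by
  intro k
  induction k using Fin.cases with
  | zero => simp
  | succ i => simp [hat]

lemma hat_neg (x : Fin n → ℤ) : ∀ k, hat (-x) k = -(hat x k) := by
  intro k
  induction k using Fin.cases with
  | zero => simp
  | succ i => simp

lemma hat_cm (x y : Fin n → ℤ) : ∀ k, hat (cm x y) k = cm (hat x) (hat y) k := by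
  intro k
  induction k using Fin.cases with
  | zero =>
    rw [hat_zero]
    show (0:ℤ) = ⌈(hat x 0 + hat y 0 : ℚ)/2⌉
    rw [hat_zero, hat_zero]
    norm_num
  | succ i =>
    rw [hat_succ]
    show cm x y i = ⌈(hat x i.succ + hat y i.succ : ℚ)/2⌉
    rw [hat_succ, hat_succ]
    rfl

lemma hat_fm (x y : Fin n → ℤ) : ∀ k, hat (fm x y) k = fm (hat x) (hat y) k := by
  intro k
  induction k using Fin.cases with
  | zero =>
    rw [hat_zero]
    show (0:ℤ) = ⌊(hat x 0 + hat y 0 : ℚ)/2⌋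
    rw [hat_zero, hat_zero]
    norm_num
  | succ i =>
    rw [hat_succ]
    show fm x y i = ⌊(hat x i.succ + hat y i.succ : ℚ)/2⌋
    rw [hat_succ, hat_succ]
    rfl

lemma Gset_zero (S : Set (Fin n → ℤ)) : (0 : Fin n → ℤ) ∈ Gset S := by
  intro i j
  right
  rw [hat_zero_fun, hat_zero_fun]
  omega

lemma Gset_add (S : Set (Fin n → ℤ)) {g h : Fin n → ℤ} (hg : g ∈ Gset S) (hh : h ∈ Gset S) :
    g + h ∈ Gset S := by
  intro i j
  rcases hg i j with hU | hg'
  · exact Or.inl hU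
  rcases hh i j with hU | hh'
  · exact Or.inl hU
  right
  rw [hat_add, hat_add]
  omega

lemma Gset_midcl (S : Set (Fin n → ℤ)) :
    ∀ g ∈ Gset S, ∀ h ∈ Gset S, cm g h ∈ Gset S ∧ fm g h ∈ Gset S := by
  intro g hg h hh
  constructor
  · intro i j
    rcases hg i j with hU | hg'
    · exact Or.inl hU
    rcases hh i j with hU | hh'
    · exact Or.inl hU
    right
    rw [hat_cm, hat_cm]
    have h1 := cm_bounds (hat g) (hat h) i
    have h2 := cm_bounds (hat g) (hat h) j
    omega
  · intro i j
    rcases hg i j with hU | hg'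
    · exact Or.inl hU
    rcases hh i j with hU | hh'
    · exact Or.inl hU
    right
    rw [hat_fm, hat_fm]
    have h1 := fm_bounds (hat g) (hat h) i
    have h2 := fm_bounds (hat g) (hat h) j
    omega

lemma exists_D (S : Set (Fin n → ℤ)) (hS0 : S.Nonempty) :
    ∃ D : ℤ, 0 ≤ D ∧ (∀ i j, ¬ Unbdd S i j → ∀ w ∈ Shat S, w j - w i ≤ D) ∧
      (∀ i j, ∃ w ∈ Shat S, -D ≤ w j - w i) := by
  classical
  obtain ⟨x0, hx0⟩ := hS0
  have hw0 : hat x0 ∈ Shat S := mem_Shat_of_mem hx0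
  have hbnd : ∀ p : Fin (n+1) × Fin (n+1), ∃ b : ℤ, 0 ≤ b ∧
      (¬ Unbdd S p.1 p.2 → ∀ w ∈ Shat S, w p.2 - w p.1 ≤ b) ∧
      (-b ≤ hat x0 p.2 - hat x0 p.1) := by
    intro p
    by_cases h : Unbdd S p.1 p.2
    · refine ⟨max 0 (hat x0 p.1 - hat x0 p.2), ?_, fun hc => absurd h hc, ?_⟩
      · exact le_max_left _ _
      · have := le_max_right 0 (hat x0 p.1 - hat x0 p.2); omega
    · unfold Unbdd at h
      push_neg at h
      obtain ⟨b, hb⟩ := h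
      refine ⟨max (max 0 (hat x0 p.1 - hat x0 p.2)) b, ?_, ?_, ?_⟩
      · have h1 := le_max_left (max 0 (hat x0 p.1 - hat x0 p.2)) b
        have h2 := le_max_left 0 (hat x0 p.1 - hat x0 p.2)
        omega
      · intro _ w hw
        have := hb w hw
        have h1 := le_max_right (max 0 (hat x0 p.1 - hat x0 p.2)) b
        omega
      · have h1 := le_max_left (max 0 (hat x0 p.1 - hat x0 p.2)) b
        have h2 := le_max_right 0 (hat x0 p.1 - hat x0 p.2)
        omega
  choose bf hb0 hb1 hb2 using hbnd
  have hne : (Finset.univ : Finset (Fin (n+1) × Fin (n+1))).Nonempty := Finset.univ_nonempty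
  refine ⟨Finset.univ.sup' hne bf, ?_, ?_, ?_⟩
  · obtain ⟨p, hp⟩ := hne
    exact le_trans (hb0 p) (Finset.le_sup' bf (Finset.mem_univ p))
  · intro i j hU w hw
    exact le_trans (hb1 (i,j) hU w hw) (Finset.le_sup' bf (Finset.mem_univ (i,j)))
  · intro i j
    refine ⟨hat x0, hw0, ?_⟩
    have h2 : -(bf (i,j)) ≤ hat x0 j - hat x0 i := hb2 (i,j)
    have h3 := Finset.le_sup' bf (Finset.mem_univ (i,j))
    omega

lemma step_pos {S : Set (Fin n → ℤ)}
    (hSc : ∀ x ∈ S, ∀ y ∈ S, cm x y ∈ S ∧ fm x y ∈ S)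
    {D : ℤ} (hD0 : 0 ≤ D)
    (hDb : ∀ i j, ¬ Unbdd S i j → ∀ w ∈ Shat S, w j - w i ≤ D)
    (hDw : ∀ i j, ∃ w ∈ Shat S, -D ≤ w j - w i)
    {s : Fin n → ℤ} (hs : s ∈ S) {K : ℤ} (hK1 : D + 1 ≤ K)
    (hgap : ∀ i, s i < K - D ∨ K ≤ s i)
    {χ : Fin n → ℤ} (hχdef : ∀ i, χ i = if K ≤ s i then 1 else 0) :
    s - χ ∈ S ∧ χ ∈ Gset S := by
  classical
  have hhat : ∀ k, hat (s - χ) k = hat s k - hat χ k := hat_sub s χ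
  have hχ01 : ∀ k, hat χ k = 0 ∨ hat χ k = 1 := by
    intro k
    induction k using Fin.cases with
    | zero => left; rfl
    | succ i =>
      rw [hat_succ, hχdef]
      by_cases h : K ≤ s i
      · right; simp [h]
      · left; simp [h]
  have hsS : hat s ∈ Shat S := mem_Shat_of_mem hs
  have hχi1 : ∀ i : Fin (n+1), hat χ i = 1 → K ≤ hat s i := by
    intro i h1
    induction i using Fin.cases with
    | zero => rw [hat_zero] at h1; exact absurd h1 (by norm_num)
    | succ i' =>
      rw [hat_succ] at h1 ⊢
      rw [hχdef] at h1
      by_cases h : K ≤ s i'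
      · exact h
      · simp [h] at h1
  have hχj0 : ∀ j : Fin (n+1), hat χ j = 0 → hat s j ≤ K - D - 1 := by
    intro j h0
    induction j using Fin.cases with
    | zero => rw [hat_zero]; omega
    | succ j' =>
      rw [hat_succ] at h0 ⊢
      rw [hχdef] at h0
      by_cases h : K ≤ s j'
      · simp [h] at h0
      · rcases hgap j' with hg | hg
        · omega
        · exact absurd hg h
  constructor
  · rw [mem_iff_feas hSc]
    intro i j
    by_cases hU : Unbdd S i j
    · obtain ⟨w, hw, hwb⟩ := hU (hat (s - χ) j - hat (s - χ) i)
      exact ⟨w, hw, by omega⟩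
    · by_cases hcase : hat χ i = 1 ∧ hat χ j = 0
      · obtain ⟨w, hw, hwge⟩ := hDw i j
        refine ⟨w, hw, ?_⟩
        rw [hhat, hhat]
        have h1 := hχi1 i hcase.1
        have h2 := hχj0 j hcase.2
        omega
      · refine ⟨hat s, hsS, ?_⟩
        rw [hhat, hhat]
        have h1 := hχ01 i
        have h2 := hχ01 j
        omega
  · intro i j
    by_cases hU : Unbdd S i j
    · exact Or.inl hU
    right
    show hat χ j - hat χ i ≤ 0
    by_cases hj1 : hat χ j = 1
    · have hj := hχi1 j hj1
      have hb := hDb i j hU (hat s) hsS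
      have hi' : K - D ≤ hat s i := by omega
      have hi1 : hat χ i = 1 := by
        induction i using Fin.cases with
        | zero => rw [hat_zero] at hi'; omega
        | succ i' =>
          rw [hat_succ] at hi' ⊢
          rcases hgap i' with hg | hg
          · omega
          · rw [hχdef]; simp [hg]
      omega
    · have h1 := hχ01 i
      have h2 := hχ01 j
      omega

lemma step_neg {S : Set (Fin n → ℤ)}
    (hSc : ∀ x ∈ S, ∀ y ∈ S, cm x y ∈ S ∧ fm x y ∈ S)
    {D : ℤ} (hD0 : 0 ≤ D)
    (hDb : ∀ i j, ¬ Unbdd S i j → ∀ w ∈ Shat S, w j - w i ≤ D)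
    (hDw : ∀ i j, ∃ w ∈ Shat S, -D ≤ w j - w i)
    {s : Fin n → ℤ} (hs : s ∈ S) {K : ℤ} (hK1 : D + 1 ≤ K)
    (hgap : ∀ i, -(s i) < K - D ∨ K ≤ -(s i))
    {χ : Fin n → ℤ} (hχdef : ∀ i, χ i = if s i ≤ -K then 1 else 0) :
    s + χ ∈ S ∧ -χ ∈ Gset S := by
  classical
  have hhat : ∀ k, hat (s + χ) k = hat s k + hat χ k := hat_add s χ
  have hhatneg : ∀ k, hat (-χ) k = -(hat χ k) := hat_neg χ
  have hχ01 : ∀ k, hat χ k = 0 ∨ hat χ k = 1 := by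
    intro k
    induction k using Fin.cases with
    | zero => left; rfl
    | succ i =>
      rw [hat_succ, hχdef]
      by_cases h : s i ≤ -K
      · right; simp [h]
      · left; simp [h]
  have hsS : hat s ∈ Shat S := mem_Shat_of_mem hs
  have hχi1 : ∀ i : Fin (n+1), hat χ i = 1 → hat s i ≤ -K := by
    intro i h1
    induction i using Fin.cases with
    | zero => rw [hat_zero] at h1; exact absurd h1 (by norm_num)
    | succ i' =>
      rw [hat_succ] at h1 ⊢
      rw [hχdef] at h1
      by_cases h : s i' ≤ -K
      · exact h
      · simp [h] at h1
  have hχj0 : ∀ j : Fin (n+1), hat χ j = 0 → -K + D + 1 ≤ hat s j := by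
    intro j h0
    induction j using Fin.cases with
    | zero => rw [hat_zero]; omega
    | succ j' =>
      rw [hat_succ] at h0 ⊢
      rw [hχdef] at h0
      by_cases h : s j' ≤ -K
      · simp [h] at h0
      · rcases hgap j' with hg | hg
        · omega
        · omega
  constructor
  · rw [mem_iff_feas hSc]
    intro i j
    by_cases hU : Unbdd S i j
    · obtain ⟨w, hw, hwb⟩ := hU (hat (s + χ) j - hat (s + χ) i)
      exact ⟨w, hw, by omega⟩
    · by_cases hcase : hat χ j = 1 ∧ hat χ i = 0
      · obtain ⟨w, hw, hwge⟩ := hDw i j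
        refine ⟨w, hw, ?_⟩
        rw [hhat, hhat]
        have h1 := hχi1 j hcase.1
        have h2 := hχj0 i hcase.2
        omega
      · refine ⟨hat s, hsS, ?_⟩
        rw [hhat, hhat]
        have h1 := hχ01 i
        have h2 := hχ01 j
        omega
  · intro i j
    by_cases hU : Unbdd S i j
    · exact Or.inl hU
    right
    rw [hhatneg, hhatneg]
    by_cases hi1 : hat χ i = 1
    · have hi := hχi1 i hi1
      have hb := hDb i j hU (hat s) hsS
      have hj' : hat s j ≤ -K + D := by omega
      have hj1 : hat χ j = 1 := by
        induction j using Fin.cases with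
        | zero => rw [hat_zero] at hj'; omega
        | succ j' =>
          rw [hat_succ] at hj' ⊢
          rcases hgap j' with hg | hg
          · omega
          · rw [hχdef]; simp; omega
      omega
    · have h1 := hχ01 i
      have h2 := hχ01 j
      omega


theorem lnat_decomp {S : Set (Fin n → ℤ)} (hS0 : S.Nonempty)
    (hSc : ∀ x ∈ S, ∀ y ∈ S, cm x y ∈ S ∧ fm x y ∈ S) :
    ∃ (T G : Set (Fin n → ℤ)) (C : ℤ), 0 ≤ C ∧
      T.Nonempty ∧ (∀ x ∈ T, ∀ y ∈ T, cm x y ∈ T ∧ fm x y ∈ T) ∧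
      (∀ t ∈ T, ∀ i, -C ≤ t i ∧ t i ≤ C) ∧
      G.Nonempty ∧ (∀ x ∈ G, ∀ y ∈ G, cm x y ∈ G ∧ fm x y ∈ G) ∧
      (0 : Fin n → ℤ) ∈ G ∧ (∀ g ∈ G, ∀ h ∈ G, g + h ∈ G) ∧
      S = T + G := by
  classical
  obtain ⟨D, hD0, hDb, hDw⟩ := exists_D S hS0
  set B : ℤ := (D+1)*(n+1)+1 with hB
  have hB0 : 0 ≤ B := by nlinarith [Int.natCast_nonneg n]
  set T : Set (Fin n → ℤ) := {x ∈ S | ∀ i, -B ≤ x i ∧ x i ≤ B} with hT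
  set G : Set (Fin n → ℤ) := Gset S with hG
  -- S ⊆ T + G
  have main : ∀ N : ℕ, ∀ s ∈ S, (∑ i, (s i).natAbs) ≤ N → s ∈ T + G := by
    intro N
    induction N using Nat.strong_induction_on with
    | _ N IH =>
    intro s hs hN
    by_cases hbd : ∀ i, -B ≤ s i ∧ s i ≤ B
    · exact Set.mem_add.mpr ⟨s, ⟨hs, hbd⟩, 0, Gset_zero S, add_zero s⟩
    · push_neg at hbd
      obtain ⟨i0, hi0⟩ := hbd
      by_cases hpos : B < s i0
      · obtain ⟨K, hK1, hK2, hgap⟩ := gap D hD0 s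
        set χ : Fin n → ℤ := fun i => if K ≤ s i then 1 else 0 with hχ
        have hχdef : ∀ i, χ i = if K ≤ s i then 1 else 0 := fun i => rfl
        obtain ⟨hs', hχG⟩ := step_pos hSc hD0 hDb hDw hs hK1 hgap hχdef
        have hχi0 : χ i0 = 1 := by rw [hχdef]; rw [if_pos (by omega)]
        have hdec : (∑ i, ((s - χ) i).natAbs) < N := by
          have hlt : (∑ i, ((s - χ) i).natAbs) < ∑ i, (s i).natAbs := by
            apply Finset.sum_lt_sum
            · intro i _
              have := hχdef i
              simp only [Pi.sub_apply]
              by_cases h : K ≤ s i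
              · rw [hχdef, if_pos h]; omega
              · rw [hχdef, if_neg h]; omega
            · refine ⟨i0, Finset.mem_univ _, ?_⟩
              simp only [Pi.sub_apply]
              rw [hχi0]
              omega
          omega
        obtain ⟨t, ht, g, hg, htg⟩ := Set.mem_add.mp (IH _ hdec _ hs' le_rfl)
        refine Set.mem_add.mpr ⟨t, ht, g + χ, Gset_add S hg hχG, ?_⟩
        funext i
        have := congrFun htg i
        simp only [Pi.add_apply, Pi.sub_apply] at this ⊢
        omega
      · have hneg : s i0 < -B := by omega
        obtain ⟨K, hK1, hK2, hgap⟩ := gap D hD0 (fun i => -(s i))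
        set χ : Fin n → ℤ := fun i => if s i ≤ -K then 1 else 0 with hχ
        have hχdef : ∀ i, χ i = if s i ≤ -K then 1 else 0 := fun i => rfl
        obtain ⟨hs', hχG⟩ := step_neg hSc hD0 hDb hDw hs hK1 hgap hχdef
        have hχi0 : χ i0 = 1 := by rw [hχdef]; rw [if_pos (by omega)]
        have hdec : (∑ i, ((s + χ) i).natAbs) < N := by
          have hlt : (∑ i, ((s + χ) i).natAbs) < ∑ i, (s i).natAbs := by
            apply Finset.sum_lt_sum
            · intro i _
              simp only [Pi.add_apply]
              by_cases h : s i ≤ -K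
              · rw [hχdef, if_pos h]; omega
              · rw [hχdef, if_neg h]; omega
            · refine ⟨i0, Finset.mem_univ _, ?_⟩
              simp only [Pi.add_apply]
              rw [hχi0]
              omega
          omega
        obtain ⟨t, ht, g, hg, htg⟩ := Set.mem_add.mp (IH _ hdec _ hs' le_rfl)
        refine Set.mem_add.mpr ⟨t, ht, g + (-χ), Gset_add S hg hχG, ?_⟩
        funext i
        have := congrFun htg i
        simp only [Pi.add_apply, Pi.neg_apply] at this ⊢
        omega
  have hsub : S ⊆ T + G := fun s hs => main _ s hs le_rfl
  -- T + G ⊆ S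
  have hsup : T + G ⊆ S := by
    intro a ha
    obtain ⟨t, ht, g, hg, hta⟩ := Set.mem_add.mp ha
    subst hta
    rw [mem_iff_feas hSc]
    intro i j
    by_cases hU : Unbdd S i j
    · obtain ⟨w, hw, hwb⟩ := hU (hat (t + g) j - hat (t + g) i)
      exact ⟨w, hw, by omega⟩
    · have hgij := (hg i j).resolve_left hU
      refine ⟨hat t, mem_Shat_of_mem ht.1, ?_⟩
      rw [hat_add, hat_add]
      omega
  have hTG : S = T + G := le_antisymm hsub hsup
  obtain ⟨s0, hs0⟩ := hS0
  obtain ⟨t0, ht0, g0, hg0, -⟩ := Set.mem_add.mp (hsub hs0)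
  refine ⟨T, G, B, hB0, ⟨t0, ht0⟩, ?_, fun t ht i => ht.2 i, ⟨0, Gset_zero S⟩,
    Gset_midcl S, Gset_zero S, fun g hg h hh => Gset_add S hg hh, hTG⟩
  intro x hx y hy
  have h1 := hSc x hx.1 y hy.1
  refine ⟨⟨h1.1, fun i => ?_⟩, ⟨h1.2, fun i => ?_⟩⟩
  · have := cm_bounds x y i
    have := hx.2 i
    have := hy.2 i
    omega
  · have := fm_bounds x y i
    have := hx.2 i
    have := hy.2 i
    omega

end Decomp

lemma coeZ_nsmul {n : ℕ} (k : ℕ) (a : Fin n → ℤ) : coeZ (k • a) = (k : ℝ) • coeZ a := by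
  funext i
  simp [coeZ]

lemma cone_of_monoid {n : ℕ} (M : Set (Fin n → ℤ)) (h0 : (0 : Fin n → ℤ) ∈ M)
    (hadd : ∀ g ∈ M, ∀ h ∈ M, g + h ∈ M) : IsConeSet (convZ M) := by
  have hns : ∀ (k : ℕ), ∀ a ∈ M, k • a ∈ M := by
    intro k
    induction k with
    | zero => intro a _; simpa using h0
    | succ m ih =>
      intro a ha
      rw [succ_nsmul]
      exact hadd _ (ih a ha) _ ha
  intro x hx lam hlam
  have key : ∀ c ∈ coeZ '' M, lam • c ∈ convexHull ℝ (coeZ '' M) := by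
    rintro - ⟨a, ha, rfl⟩
    set k := ⌊lam⌋₊ with hk
    have hk1 : (k : ℝ) ≤ lam := Nat.floor_le hlam
    have hk2 : lam < k + 1 := Nat.lt_floor_add_one lam
    have h1 : (k : ℝ) • coeZ a ∈ coeZ '' M := by
      rw [← coeZ_nsmul]; exact Set.mem_image_of_mem _ (hns k a ha)
    have h2 : ((k : ℝ) + 1) • coeZ a ∈ coeZ '' M := by
      have : ((k : ℝ) + 1) = ((k + 1 : ℕ) : ℝ) := by push_cast; ring
      rw [this, ← coeZ_nsmul]
      exact Set.mem_image_of_mem _ (hns (k+1) a ha)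
    have heq : lam • coeZ a
        = (1 - (lam - k)) • ((k : ℝ) • coeZ a) + (lam - k) • (((k : ℝ) + 1) • coeZ a) := by
      rw [smul_smul, smul_smul, ← add_smul]
      congr 1
      ring
    rw [heq]
    exact (convex_convexHull ℝ _) (subset_convexHull ℝ _ h1) (subset_convexHull ℝ _ h2)
      (by linarith) (by linarith) (by ring)
  have h3 : lam • x ∈ convexHull ℝ (lam • (coeZ '' M)) := by
    rw [convexHull_smul]
    exact Set.smul_mem_smul_set hx
  refine convexHull_min ?_ (convex_convexHull ℝ _) h3
  rintro - ⟨c, hc, rfl⟩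
  exact key c hc

lemma bounded_of_coord_bound {n : ℕ} (A : Set (Fin n → ℤ)) (C : ℝ) (hC : 0 ≤ C)
    (h : ∀ a ∈ A, ∀ i, |(a i : ℝ)| ≤ C) : Bornology.IsBounded (coeZ '' A) := by
  apply (Metric.isBounded_closedBall (x := (0 : Fin n → ℝ)) (r := C)).subset
  rintro - ⟨a, ha, rfl⟩
  rw [Metric.mem_closedBall, dist_zero_right]
  rw [pi_norm_le_iff_of_nonneg hC]
  intro i
  rw [Real.norm_eq_abs]
  exact h a ha i


end L2D

open L2D in
/-- Every L²♮-convex set `S ⊆ ℤ^n` decomposes as `S = T + G` with a bounded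
L²♮-convex set `T` and a conic L²♮-convex set `G`. -/
theorem l2natSet_decomposition {n : ℕ} (S : Set (Fin n → ℤ))
    (hS : IsL2NatSet S) :
    ∃ T G : Set (Fin n → ℤ),
      IsL2NatSet T ∧ Bornology.IsBounded (coeZ '' T) ∧
      IsL2NatSet G ∧ IsConeSet (convZ G) ∧
      S = T + G := by
  obtain ⟨S₁, S₂, h1, h2, rfl⟩ := hS
  have hSc1 : ∀ x ∈ S₁, ∀ y ∈ S₁, cm x y ∈ S₁ ∧ fm x y ∈ S₁ := h1.2
  have hSc2 : ∀ x ∈ S₂, ∀ y ∈ S₂, cm x y ∈ S₂ ∧ fm x y ∈ S₂ := h2.2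
  obtain ⟨T₁, G₁, C₁, hC₁0, hT₁ne, hT₁c, hT₁b, hG₁ne, hG₁c, hG₁0, hG₁add, hS₁⟩ :=
    lnat_decomp h1.1 hSc1
  obtain ⟨T₂, G₂, C₂, hC₂0, hT₂ne, hT₂c, hT₂b, hG₂ne, hG₂c, hG₂0, hG₂add, hS₂⟩ :=
    lnat_decomp h2.1 hSc2
  refine ⟨T₁ + T₂, G₁ + G₂, ⟨T₁, T₂, ⟨hT₁ne, hT₁c⟩, ⟨hT₂ne, hT₂c⟩, rfl⟩, ?_,
    ⟨G₁, G₂, ⟨hG₁ne, hG₁c⟩, ⟨hG₂ne, hG₂c⟩, rfl⟩, ?_, ?_⟩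
  · apply bounded_of_coord_bound _ ((C₁ : ℝ) + C₂) (by positivity)
    intro a ha i
    obtain ⟨t₁, ht₁, t₂, ht₂, rfl⟩ := Set.mem_add.mp ha
    have b1 := hT₁b t₁ ht₁ i
    have b2 := hT₂b t₂ ht₂ i
    have : |(t₁ + t₂) i| ≤ C₁ + C₂ := by
      simp only [Pi.add_apply]
      rw [abs_le]
      omega
    calc |(((t₁ + t₂) i : ℤ) : ℝ)| = ((|(t₁ + t₂) i| : ℤ) : ℝ) := by
          rw [Int.cast_abs]
      _ ≤ ((C₁ + C₂ : ℤ) : ℝ) := by exact_mod_cast this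
      _ = (C₁ : ℝ) + C₂ := by push_cast; ring
  · apply cone_of_monoid
    · exact Set.mem_add.mpr ⟨0, hG₁0, 0, hG₂0, by simp⟩
    · rintro - ⟨g₁, hg₁, g₂, hg₂, rfl⟩ - ⟨k₁, hk₁, k₂, hk₂, rfl⟩
      exact Set.mem_add.mpr ⟨g₁ + k₁, hG₁add _ hg₁ _ hk₁, g₂ + k₂, hG₂add _ hg₂ _ hk₂,
        add_add_add_comm g₁ k₁ g₂ k₂⟩
  · rw [hS₁, hS₂]
    exact add_add_add_comm T₁ G₁ T₂ G₂
end
end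

section
/- Let Q ⊆ ℝ³ be the convex hull of {(1,0,0), (0,1,0), (0,0,1)} and let C = {λ(1,1,1) : λ ≥ 0}. Then Q is a bounded box-integer polyhedron and C is a box-integer polyhedral cone, but the Minkowski sum Q + C is not a box-integer polyhedron. -/
open Set Pointwise

noncomputable section

/-- Helper: the standard 2-simplex description of `Q`. -/
lemma hull3_eq :
    convexHull ℝ {![(1:ℝ),0,0], ![(0:ℝ),1,0], ![(0:ℝ),0,1]} =
      {x : Fin 3 → ℝ | 0 ≤ x 0 ∧ 0 ≤ x 1 ∧ 0 ≤ x 2 ∧ x 0 + x 1 + x 2 = 1} := by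
  apply le_antisymm
  · apply convexHull_min
    · intro v hv
      simp only [Set.mem_insert_iff, Set.mem_singleton_iff] at hv
      rcases hv with rfl | rfl | rfl <;> norm_num [Matrix.cons_val_two]
    · intro x hx y hy a b ha hb hab
      simp only [Set.mem_setOf_eq, Pi.add_apply, Pi.smul_apply, smul_eq_mul] at *
      refine ⟨by nlinarith [hx.1, hy.1], by nlinarith [hx.2.1, hy.2.1],
        by nlinarith [hx.2.2.1, hy.2.2.1], by nlinarith [hx.2.2.2, hy.2.2.2]⟩
  · intro x hx
    obtain ⟨h0, h1, h2, hsum⟩ := hx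
    have hx' : x = x 0 • ![(1:ℝ),0,0] + x 1 • ![(0:ℝ),1,0] + x 2 • ![(0:ℝ),0,1] := by
      funext j
      fin_cases j <;> simp
    rw [hx']
    have hS : ({![(1:ℝ),0,0], ![(0:ℝ),1,0], ![(0:ℝ),0,1]} : Set (Fin 3 → ℝ)) ⊆
        convexHull ℝ ({![(1:ℝ),0,0], ![(0:ℝ),1,0], ![(0:ℝ),0,1]} : Set (Fin 3 → ℝ)) :=
      subset_convexHull ℝ _
    have hsum3 : x 0 • ![(1:ℝ),0,0] + x 1 • ![(0:ℝ),1,0] + x 2 • ![(0:ℝ),0,1]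
        = ∑ i : Fin 3, x i • ![![(1:ℝ),0,0], ![(0:ℝ),1,0], ![(0:ℝ),0,1]] i := by
      simp [Fin.sum_univ_three]
    rw [hsum3]
    refine (convex_convexHull ℝ _).sum_mem (fun i _ => ?_) (by simp [Fin.sum_univ_three, hsum]) (fun i _ => ?_)
    · fin_cases i <;> assumption
    · fin_cases i <;> exact hS (by simp)

/-- Helper: a convex combination of three points, each needed only when its weight
is nonzero, lies in the convex hull. -/
lemma mem_hull_of_comb {S : Set (Fin 3 → ℝ)} {w : Fin 3 → ℝ} {z : Fin 3 → (Fin 3 → ℝ)}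
    (hw : ∀ i, 0 ≤ w i) (hsum : ∑ i, w i = 1) (hz : ∀ i, w i ≠ 0 → z i ∈ S) :
    (∑ i, w i • z i) ∈ convexHull ℝ S := by
  classical
  set t := Finset.univ.filter (fun i => w i ≠ 0) with ht
  have h1 : ∑ i ∈ t, w i = 1 := by
    rw [ht, Finset.sum_filter_ne_zero]; exact hsum
  have h2 : ∑ i ∈ t, w i • z i = ∑ i, w i • z i := by
    rw [ht]
    refine Finset.sum_filter_of_ne ?_
    intro i _ hne hwi
    exact hne (by rw [hwi, zero_smul])
  have hm := Finset.centerMass_mem_convexHull (s := S) t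
    (fun i _ => hw i) (by rw [h1]; norm_num)
    (fun i hi => hz i (by simpa [ht] using hi))
  rwa [Finset.centerMass, h1, h2, inv_one, one_smul] at hm

lemma convex_intBox {n : ℕ} (l u : Fin n → ℤ) : Convex ℝ (intBox l u) := by
  intro x hx y hy a b ha hb hab
  intro i
  have h1 := hx i
  have h2 := hy i
  simp only [Pi.add_apply, Pi.smul_apply, smul_eq_mul]
  have el : a * (l i:ℝ) + b * (l i:ℝ) = (l i:ℝ) := by rw [← add_mul, hab, one_mul]
  have eu : a * (u i:ℝ) + b * (u i:ℝ) = (u i:ℝ) := by rw [← add_mul, hab, one_mul]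
  constructor
  · have := add_le_add (mul_le_mul_of_nonneg_left h1.1 ha) (mul_le_mul_of_nonneg_left h2.1 hb)
    linarith
  · have := add_le_add (mul_le_mul_of_nonneg_left h1.2 ha) (mul_le_mul_of_nonneg_left h2.2 hb)
    linarith

lemma hull_intPts_subset {n : ℕ} {P : Set (Fin n → ℝ)} (hP : Convex ℝ P) :
    convexHull ℝ (intPts P) ⊆ P :=
  convexHull_min (fun x hx => hx.1) hP

/-- `Q = conv{(1,0,0),(0,1,0),(0,0,1)}` is a bounded box-integer polyhedron
and `C = {λ(1,1,1) : λ ≥ 0}` is a box-integer polyhedral cone, but `Q + C` is not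
box-integer. -/
theorem minkowskiSum_not_boxInteger
    (Q C : Set (Fin 3 → ℝ))
    (hQ : Q = convexHull ℝ {![(1:ℝ),0,0], ![(0:ℝ),1,0], ![(0:ℝ),0,1]})
    (hC : C = {x | ∃ lam : ℝ, 0 ≤ lam ∧ x = lam • ![(1:ℝ),1,1]}) :
    IsPolyhedron Q ∧ Bornology.IsBounded Q ∧ IsBoxInteger Q ∧
    IsPolyhedron C ∧ IsConeSet C ∧ IsBoxInteger C ∧
    ¬ IsBoxInteger (Q + C) := by
  have hQ' : Q = {x : Fin 3 → ℝ | 0 ≤ x 0 ∧ 0 ≤ x 1 ∧ 0 ≤ x 2 ∧ x 0 + x 1 + x 2 = 1} := by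
    rw [hQ, hull3_eq]
  have hC' : C = {x : Fin 3 → ℝ | x 1 = x 0 ∧ x 2 = x 0 ∧ 0 ≤ x 0} := by
    rw [hC]; ext x
    constructor
    · rintro ⟨lam, hlam, rfl⟩
      refine ⟨by simp, by simp, by simpa using hlam⟩
    · rintro ⟨h1, h2, h0⟩
      exact ⟨x 0, h0, by funext i; fin_cases i <;> simp [h1, h2]⟩
  have hQconv : Convex ℝ Q := hQ ▸ convex_convexHull ℝ _
  have hCconv : Convex ℝ C := by
    rw [hC']
    intro x hx y hy s t hs ht hst
    simp only [Set.mem_setOf_eq, Pi.add_apply, Pi.smul_apply, smul_eq_mul] at *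
    exact ⟨by rw [hx.1, hy.1], by rw [hx.2.1, hy.2.1],
      add_nonneg (mul_nonneg hs hx.2.2) (mul_nonneg ht hy.2.2)⟩
  refine ⟨?_, ?_, ?_, ?_, ?_, ?_, ?_⟩
  -- 1. Q is a polyhedron
  · refine ⟨⟨![1,0,0], by rw [hQ']; norm_num [Matrix.cons_val_two]⟩, 5,
      !![-1,0,0; 0,-1,0; 0,0,-1; 1,1,1; -1,-1,-1], ![0,0,0,1,-1], ?_⟩
    rw [hQ']
    ext x
    simp only [Set.mem_setOf_eq, Pi.le_def]
    constructor
    · rintro ⟨h0, h1, h2, hs⟩ i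
      fin_cases i <;>
        simp [Matrix.mulVec, dotProduct, Fin.sum_univ_three] <;> linarith
    · intro h
      have h0 := h 0; have h1 := h 1; have h2 := h 2; have h3 := h 3; have h4 := h 4
      simp [Matrix.mulVec, dotProduct, Fin.sum_univ_three] at h0 h1 h2 h3 h4
      exact ⟨by linarith, by linarith, by linarith, by linarith⟩
  -- 2. Q is bounded
  · rw [hQ]
    exact ((Set.toFinite _).isCompact_convexHull (𝕜 := ℝ)).isBounded
  -- 3. Q is box-integer
  · intro l u hlu hne
    refine Set.Subset.antisymm ?_ (hull_intPts_subset (hQconv.inter (convex_intBox l u)))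
    rintro x ⟨hxQ, hxB⟩
    rw [hQ'] at hxQ
    obtain ⟨h0, h1, h2, hs⟩ := hxQ
    have hx' : x = ∑ i : Fin 3, x i • (![![(1:ℝ),0,0], ![(0:ℝ),1,0], ![(0:ℝ),0,1]]) i := by
      rw [Fin.sum_univ_three]
      funext j; fin_cases j <;> simp
    rw [hx']
    refine mem_hull_of_comb (fun i => by fin_cases i <;> assumption)
      (by simp [Fin.sum_univ_three]; linarith) ?_
    intro i hi
    have hipos : 0 < x i := lt_of_le_of_ne (by fin_cases i <;> assumption) (Ne.symm hi)
    have hvec : (![![(1:ℝ),0,0], ![(0:ℝ),1,0], ![(0:ℝ),0,1]]) i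
        = (fun j => if j = i then (1:ℝ) else 0) := by
      fin_cases i <;> · funext j; fin_cases j <;>
        norm_num [Matrix.vecHead, Matrix.vecTail, Fin.ext_iff]
    rw [hvec]
    have hbox : (fun j => if j = i then (1:ℝ) else 0) ∈ intBox l u := by
      intro j
      by_cases hji : j = i
      · subst hji
        simp only [if_pos rfl]
        constructor
        · have hxi1 : x j ≤ 1 := by fin_cases j <;> simp <;> linarith
          exact le_trans (hxB j).1 hxi1
        · have hu0 : (0:ℝ) < (u j : ℝ) := lt_of_lt_of_le hipos (hxB j).2
          have hu1 : (1:ℤ) ≤ u j := by exact_mod_cast hu0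
          exact_mod_cast hu1
      · simp only [if_neg hji]
        constructor
        · have hpair : x i + x j ≤ 1 := by
            fin_cases i <;> fin_cases j <;> first
              | exact absurd rfl hji
              | (simp; linarith)
          have hxj : x j < 1 := by linarith
          have hl1 : (l j : ℝ) < 1 := lt_of_le_of_lt (hxB j).1 hxj
          have hl0 : l j ≤ 0 := by
            have : l j < 1 := by exact_mod_cast hl1
            omega
          exact_mod_cast hl0
        · have hxj0 : 0 ≤ x j := by fin_cases j <;> assumption
          exact le_trans hxj0 (hxB j).2
    refine ⟨⟨?_, hbox⟩, ?_⟩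
    · rw [hQ']
      fin_cases i <;> norm_num [show (2:Fin 3) ≠ 0 by decide, show (2:Fin 3) ≠ 1 by decide] <;> exact ⟨by split_ifs <;> norm_num, rfl⟩
    · intro j
      by_cases h : j = i
      · exact ⟨1, by simp [h]⟩
      · exact ⟨0, by simp [h]⟩
  -- 4. C is a polyhedron
  · refine ⟨⟨0, by rw [hC']; simp⟩, 5,
      !![1,-1,0; -1,1,0; 0,1,-1; 0,-1,1; -1,0,0], 0, ?_⟩
    rw [hC']
    ext x
    simp only [Set.mem_setOf_eq, Pi.le_def]
    constructor
    · rintro ⟨h1, h2, h0⟩ i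
      fin_cases i <;>
        simp [Matrix.mulVec, dotProduct, Fin.sum_univ_three] <;> linarith
    · intro h
      have h0 := h 0; have h1 := h 1; have h2 := h 2; have h3 := h 3; have h4 := h 4
      simp [Matrix.mulVec, dotProduct, Fin.sum_univ_three] at h0 h1 h2 h3 h4
      exact ⟨by linarith, by linarith, by linarith⟩
  -- 5. C is a cone
  · rw [hC]
    rintro x ⟨lam, hlam, rfl⟩ t ht
    exact ⟨t * lam, mul_nonneg ht hlam, by rw [smul_smul]⟩
  -- 6. C is box-integer
  · rintro l u hlu ⟨x0, ⟨hx0C, hx0B⟩⟩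
    rw [hC'] at hx0C
    obtain ⟨he1, he2, he0⟩ := hx0C
    set a : ℤ := max 0 (max (l 0) (max (l 1) (l 2))) with ha
    set b : ℤ := min (u 0) (min (u 1) (u 2)) with hb
    have ha0 : (0:ℤ) ≤ a := le_max_left _ _
    have haR : (a:ℝ) ≤ x0 0 := by
      have hc : (a:ℝ) = max 0 (max ((l 0 : ℝ)) (max ((l 1 : ℝ)) ((l 2 : ℝ)))) := by
        rw [ha]; push_cast [Int.cast_max]; norm_num
      rw [hc]
      simp only [max_le_iff]
      refine ⟨he0, le_trans (hx0B 0).1 le_rfl, ?_, ?_⟩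
      · rw [← he1]; exact (hx0B 1).1
      · rw [← he2]; exact (hx0B 2).1
    have hbR : x0 0 ≤ (b:ℝ) := by
      have hc : (b:ℝ) = min ((u 0 : ℝ)) (min ((u 1 : ℝ)) ((u 2 : ℝ))) := by
        rw [hb]; push_cast [Int.cast_min]; norm_num
      rw [hc]
      simp only [le_min_iff]
      refine ⟨(hx0B 0).2, ?_, ?_⟩
      · rw [← he1]; exact (hx0B 1).2
      · rw [← he2]; exact (hx0B 2).2
    have habZ : a ≤ b := by exact_mod_cast le_trans haR hbR
    have hbox_pt : ∀ c : ℤ, a ≤ c → c ≤ b → (fun _ : Fin 3 => (c:ℝ)) ∈ C ∩ intBox l u := by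
      intro c hac hcb
      constructor
      · rw [hC']
        refine ⟨rfl, rfl, ?_⟩
        show (0:ℝ) ≤ (c:ℝ)
        exact_mod_cast le_trans ha0 hac
      · intro i
        have h1 : l i ≤ c := by fin_cases i <;> (try simp) <;> omega
        have h2 : c ≤ u i := by fin_cases i <;> (try simp) <;> omega
        constructor
        · show (l i : ℝ) ≤ (c:ℝ); exact_mod_cast h1
        · show (c:ℝ) ≤ (u i : ℝ); exact_mod_cast h2
    have hpa : (fun _ : Fin 3 => (a:ℝ)) ∈ intPts (C ∩ intBox l u) :=
      ⟨hbox_pt a le_rfl habZ, fun i => ⟨a, rfl⟩⟩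
    have hpb : (fun _ : Fin 3 => (b:ℝ)) ∈ intPts (C ∩ intBox l u) :=
      ⟨hbox_pt b habZ le_rfl, fun i => ⟨b, rfl⟩⟩
    refine Set.Subset.antisymm ?_ (hull_intPts_subset (hCconv.inter (convex_intBox l u)))
    rintro y ⟨hyC, hyB⟩
    rw [hC'] at hyC
    obtain ⟨hy1, hy2, hy0⟩ := hyC
    have hyaR : (a:ℝ) ≤ y 0 := by
      have hc : (a:ℝ) = max 0 (max ((l 0 : ℝ)) (max ((l 1 : ℝ)) ((l 2 : ℝ)))) := by
        rw [ha]; push_cast [Int.cast_max]; norm_num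
      rw [hc]
      simp only [max_le_iff]
      exact ⟨hy0, (hyB 0).1, by rw [← hy1]; exact (hyB 1).1, by rw [← hy2]; exact (hyB 2).1⟩
    have hybR : y 0 ≤ (b:ℝ) := by
      have hc : (b:ℝ) = min ((u 0 : ℝ)) (min ((u 1 : ℝ)) ((u 2 : ℝ))) := by
        rw [hb]; push_cast [Int.cast_min]; norm_num
      rw [hc]
      simp only [le_min_iff]
      exact ⟨(hyB 0).2, by rw [← hy1]; exact (hyB 1).2, by rw [← hy2]; exact (hyB 2).2⟩
    by_cases hab2 : (a:ℝ) = (b:ℝ)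
    · have hya : y = (fun _ : Fin 3 => (a:ℝ)) := by
        funext i
        have : y 0 = (a:ℝ) := le_antisymm (hab2 ▸ hybR) hyaR
        fin_cases i <;> simp [hy1, hy2, this]
      rw [hya]
      exact subset_convexHull ℝ _ hpa
    · have hlt : (a:ℝ) < (b:ℝ) := lt_of_le_of_ne (by exact_mod_cast habZ) hab2
      set θ : ℝ := (y 0 - a) / ((b:ℝ) - a) with hθ
      have hθ0 : 0 ≤ θ := div_nonneg (by linarith) (by linarith)
      have hθ1 : θ ≤ 1 := by
        rw [hθ, div_le_one (by linarith)]; linarith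
      have hthe : θ * ((b:ℝ) - a) = y 0 - a := div_mul_cancel₀ _ (by linarith)
      have hyrep : y = (1 - θ) • (fun _ : Fin 3 => (a:ℝ)) + θ • (fun _ : Fin 3 => (b:ℝ)) := by
        funext i
        have hcoord : y i = y 0 := by fin_cases i <;> simp [hy1, hy2]
        simp only [Pi.add_apply, Pi.smul_apply, smul_eq_mul]
        rw [hcoord]
        nlinarith [hthe]
      rw [hyrep]
      exact segment_subset_convexHull hpa hpb
        ⟨1 - θ, θ, by linarith, hθ0, by ring, rfl⟩
  -- 7. Q + C is not box-integer
  · intro hB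
    have hlu : (fun _ : Fin 3 => (0:ℤ)) ≤ (fun _ : Fin 3 => (1:ℤ)) := fun i => zero_le_one
    have hqmem : ![(1:ℝ),0,0] ∈ Q := by rw [hQ']; norm_num [Matrix.cons_val_two]
    have h0C : (0 : Fin 3 → ℝ) ∈ C := by
      rw [hC']; exact ⟨rfl, rfl, le_rfl⟩
    have hne : ((Q + C) ∩ intBox (fun _ => 0) (fun _ => 1)).Nonempty := by
      refine ⟨![(1:ℝ),0,0], Set.mem_add.mpr ⟨![(1:ℝ),0,0], hqmem, 0, h0C, add_zero _⟩, ?_⟩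
      intro i; fin_cases i <;> norm_num
    have key := hB (fun _ => 0) (fun _ => 1) hlu hne
    have hp : ![(1:ℝ)/2, 1, 1] ∈ (Q + C) ∩ intBox (fun _ => 0) (fun _ => 1) := by
      constructor
      · refine Set.mem_add.mpr ⟨![(0:ℝ), 1/2, 1/2], ?_, ![(1:ℝ)/2, 1/2, 1/2], ?_, ?_⟩
        · rw [hQ']; norm_num [Matrix.cons_val_two]
        · rw [hC']; norm_num [Matrix.cons_val_two]
        · funext i; fin_cases i <;> norm_num
      · intro i; fin_cases i <;> norm_num
    rw [key] at hp
    have hsub : intPts ((Q + C) ∩ intBox (fun _ => 0) (fun _ => 1)) ⊆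
        {x : Fin 3 → ℝ | 2 * x 1 + 2 * x 2 - 2 * x 0 ≤ 2} := by
      rintro z ⟨⟨hzQC, hzB⟩, hzInt⟩
      obtain ⟨q, hq, c, hc, hqc⟩ := Set.mem_add.mp hzQC
      rw [hQ'] at hq
      rw [hC] at hc
      obtain ⟨lam, hlam, rfl⟩ := hc
      obtain ⟨hq0, hq1, hq2, hqs⟩ := hq
      have e0 : q 0 + lam = z 0 := by rw [← hqc]; simp
      have e1 : q 1 + lam = z 1 := by rw [← hqc]; simp
      have e2 : q 2 + lam = z 2 := by rw [← hqc]; simp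
      have hlin : z 1 + z 2 - 2 * z 0 ≤ 1 := by linarith
      obtain ⟨m0, hm0⟩ := hzInt 0
      obtain ⟨m1, hm1⟩ := hzInt 1
      obtain ⟨m2, hm2⟩ := hzInt 2
      have hb1 : z 1 ≤ 1 := by have := (hzB 1).2; simpa using this
      have hb2 : z 2 ≤ 1 := by have := (hzB 2).2; simpa using this
      have h2m : ((2 * (m1 + m2 - m0) : ℤ) : ℝ) ≤ 3 := by
        push_cast
        rw [← hm0, ← hm1, ← hm2]
        linarith
      have h2m' : 2 * (m1 + m2 - m0) ≤ 3 := by exact_mod_cast h2m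
      have h2m2 : 2 * (m1 + m2 - m0) ≤ 2 := by omega
      have h2m2R : ((2 * (m1 + m2 - m0) : ℤ) : ℝ) ≤ 2 := by exact_mod_cast h2m2
      simp only [Set.mem_setOf_eq]
      rw [hm0, hm1, hm2]
      push_cast at h2m2R ⊢
      linarith
    have hconvH : Convex ℝ {x : Fin 3 → ℝ | 2 * x 1 + 2 * x 2 - 2 * x 0 ≤ 2} := by
      intro x hx y hy s t hs ht hst
      simp only [Set.mem_setOf_eq, Pi.add_apply, Pi.smul_apply, smul_eq_mul] at *
      nlinarith [mul_le_mul_of_nonneg_left hx hs, mul_le_mul_of_nonneg_left hy ht]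
    have hfin := convexHull_min hsub hconvH hp
    simp only [Set.mem_setOf_eq] at hfin
    norm_num [Matrix.cons_val_two] at hfin
end
end
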